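/- arXiv:2103.11605 — 4 statements merged into one kernel-verified Lean document; each statement's English description precedes it below -/
import Mathlib

section
/- Let p ≥ 2, c ≥ 1 be integers and b = pc − 1. Let 0 = s_0 < s_1 < ⋯ < s_k < n and set s_{k+1} := n. Then the probability that the set of d′-descents of the (b,n,p)-shuffle equals {s_1,…,s_k} is P′(s_1,…,s_k) = b^{−n} · det( f′(i,j) )_{i,j = 0,…,k}, where f′(i,j) = binom(s_{j+1} − s_i + b − 1, b − 1) for 0 ≤ i ≤ k and 0 ≤ j ≤ k−1, and f′(i,k) = binom(n − s_i + b − c, b − c) for 0 ≤ i ≤ k. -/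
open scoped Classical

noncomputable section

/-- Binomial coefficient with integer top, taken to be `0` when the top is negative
(so in particular `zchoose a r = 0` whenever `a < r`). -/
def zchoose (a : ℤ) (r : ℕ) : ℕ := if 0 ≤ a then a.toNat.choose r else 0

/-- Rank of a color `r ∈ Z_p` in the order `0, p-1, p-2, …, 1` used to define
the linear order on `Σ = {1,…,n} × Z_p`. -/
def rho (p : ℕ) (r : ZMod p) : ℕ := if r = 0 then 0 else p - r.val

/-- The linear order on `Σ`: `(i,r) < (j,s)` iff the color of `r` comes strictly earlier
(in the order `0, p-1, …, 1`), or the colors agree and `i < j`. -/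
def sigmaLt (p : ℕ) (x y : ℕ × ZMod p) : Prop :=
  rho p x.2 < rho p y.2 ∨ (rho p x.2 = rho p y.2 ∧ x.1 < y.1)

/-- The position part of the `(b,n,p)`-shuffle determined by labels `A`:
`σ(i) = #{j : A j < A i, or A j = A i and j ≤ i}`. -/
def shufflePos {n b : ℕ} (A : Fin n → Fin b) (i : Fin n) : ℕ :=
  (Finset.univ.filter fun j : Fin n => A j < A i ∨ (A j = A i ∧ j ≤ i)).card

/-- The color part of the `(b,n,p)`-shuffle determined by labels `A`: `σ_c(i) = A i mod p`. -/
def shuffleCol (p : ℕ) {n b : ℕ} (A : Fin n → Fin b) (i : Fin n) : ZMod p :=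
  ((A i : ℕ) : ZMod p)

/-- The pair `(σ(i), σ_c(i))` of the `(b,n,p)`-shuffle determined by labels `A`. -/
def shufflePair (p : ℕ) {n b : ℕ} (A : Fin n → Fin b) (i : Fin n) : ℕ × ZMod p :=
  (shufflePos A i, shuffleCol p A i)

/-- The shuffle `π[A]` has a d-descent at position `i+1` (positions are `1,…,n`):
for positions `< n` this means `(σ(i),σ_c(i)) > (σ(i+1),σ_c(i+1))`,
and at position `n` it means `σ_c(n) ≠ 0`. -/
def shuffleHasDDescentAt (p : ℕ) {n b : ℕ} (A : Fin n → Fin b) (i : Fin n) : Prop :=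
  if h : (i : ℕ) + 1 < n then
    sigmaLt p (shufflePair p A ⟨(i : ℕ) + 1, h⟩) (shufflePair p A i)
  else shuffleCol p A i ≠ 0

/-- The set of d-descent positions (a subset of `{1,…,n}`) of the shuffle `π[A]`. -/
def shuffleDDescentSet (p : ℕ) {n b : ℕ} (A : Fin n → Fin b) : Finset ℕ :=
  (Finset.univ.filter fun i : Fin n => shuffleHasDDescentAt p A i).image fun i => (i : ℕ) + 1


/-- The dash order on `Σ`: `(i,r) <′ (j,s)` iff `r < s` (colors in the order `0,1,…,p-1`),
or `r = s` and `i < j`. -/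
def sigmaLt' {p : ℕ} (x y : ℕ × ZMod p) : Prop :=
  x.2.val < y.2.val ∨ (x.2 = y.2 ∧ x.1 < y.1)

/-- The shuffle `π[A]` has a d′-descent at position `i+1` (positions are `1,…,n`):
for positions `< n` this means `(σ(i),σ_c(i)) >′ (σ(i+1),σ_c(i+1))`,
and at position `n` it means `σ_c(n) = p - 1`. -/
def shuffleHasD'DescentAt (p : ℕ) {n b : ℕ} (A : Fin n → Fin b) (i : Fin n) : Prop :=
  if h : (i : ℕ) + 1 < n then
    sigmaLt' (shufflePair p A ⟨(i : ℕ) + 1, h⟩) (shufflePair p A i)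
  else shuffleCol p A i = ((p - 1 : ℕ) : ZMod p)

/-- The set of d′-descent positions (a subset of `{1,…,n}`) of the shuffle `π[A]`. -/
def shuffleD'DescentSet (p : ℕ) {n b : ℕ} (A : Fin n → Fin b) : Finset ℕ :=
  (Finset.univ.filter fun i : Fin n => shuffleHasD'DescentAt p A i).image fun i => (i : ℕ) + 1

/-!
Relabelling every letter `a < b` by `κ a = (a % p) * c + a / p` is a permutation of
`{0, …, b - 1}` (this is where `b = pc - 1` enters). It turns the dash order on the pairs
`(σ(i), σ_c(i))` into the usual order on the letters `κ (A i)`, and a d′-descent at `n` into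
`κ (A n) > b - c`. So one counts words `B : Fin n → Fin b` with descent set exactly `S` and last
letter `≤ b - c`. Cutting a word at `s_k` into a word with descent set `{s_1, …, s_{k-1}}` and a
weakly increasing tail yields a word whose descent set is that set or that set plus `s_k`; this
recursion is the expansion of the determinant along its last row, and weakly increasing words are
counted by stars and bars.
-/

open Finset

section StarsAndBars

variable {d N : ℕ} {g : Fin d → Fin N}

theorem Fin.val_sub_le_val_sub_of_strictMono (hg : StrictMono g) {i j : Fin d} (hij : i ≤ j) :
    (j : ℕ) - i ≤ g j - g i := by
  have := card_le_card_of_injOn g (s := Icc i j) (t := Icc (g i) (g j))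
    (fun x hx => by
      simp only [coe_Icc, Set.mem_Icc] at hx ⊢
      exact ⟨hg.monotone hx.1, hg.monotone hx.2⟩) hg.injective.injOn
  simp only [Fin.card_Icc] at this
  omega

theorem Fin.le_val_of_strictMono (hg : StrictMono g) (i : Fin d) : (i : ℕ) ≤ g i := by
  have := Fin.val_sub_le_val_sub_of_strictMono hg (i := ⟨0, i.pos⟩) (j := i)
    (Fin.le_def.mpr (Nat.zero_le _))
  simp only at this
  omega

theorem Fin.val_add_le_of_strictMono (hg : StrictMono g) (i : Fin d) : (g i : ℕ) + d ≤ N + i := by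
  have hi := i.isLt
  have := Fin.val_sub_le_val_sub_of_strictMono hg (i := i) (j := ⟨d - 1, by omega⟩)
    (Fin.le_def.mpr (by simp only; omega))
  have := (g ⟨d - 1, by omega⟩).isLt
  simp only at *
  omega

end StarsAndBars

def monotoneLeEquivOrderEmbedding {b v : ℕ} (hv : v < b) (d : ℕ) :
    {f : Fin d → Fin b // Monotone f ∧ ∀ i, (f i : ℕ) ≤ v} ≃ (Fin d ↪o Fin (v + d)) where
  toFun f := OrderEmbedding.ofStrictMono (fun i => ⟨f.1 i + i, by have := f.2.2 i; omega⟩)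
    fun i j hij => by
      have := f.2.1 hij.le
      simp only [Fin.lt_def, Fin.le_def] at hij this ⊢
      omega
  invFun g := by
    have hup := Fin.val_add_le_of_strictMono g.strictMono
    refine ⟨fun i => ⟨g i - i, by have := hup i; omega⟩, fun i j hij => ?_, fun i => ?_⟩
    · have := Fin.val_sub_le_val_sub_of_strictMono g.strictMono hij
      have := Fin.le_def.mp (g.monotone hij)
      rw [Fin.le_def] at hij
      change (g i : ℕ) - i ≤ g j - j
      omega
    · have := hup i
      dsimp only
      omega
  left_inv f := by ext i; exact Nat.add_sub_cancel ..
  right_inv g := by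
    ext i
    exact Nat.sub_add_cancel (Fin.le_val_of_strictMono g.strictMono i)

theorem card_monotone_le {b v : ℕ} (hv : v < b) (d : ℕ) :
    #{f : Fin d → Fin b | Monotone f ∧ ∀ i, (f i : ℕ) ≤ v} = (v + d).choose d := by
  rw [← Fintype.card_subtype, Fintype.card_congr (monotoneLeEquivOrderEmbedding hv d),
    ← Nat.card_eq_fintype_card, Nat.card_congr Set.powersetCard.ofFinEmbEquiv,
    Set.powersetCard.card, Nat.card_eq_fintype_card, Fintype.card_fin]

theorem Finset.erase_eq_iff_eq_or_eq_insert {β : Type*} [DecidableEq β] {s t : Finset β} {a : β}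
    (ht : a ∉ t) : s.erase a = t ↔ s = t ∨ s = insert a t := by
  by_cases hs : a ∈ s
  · rw [erase_eq_iff_eq_insert hs ht]
    exact ⟨Or.inr, fun h => h.resolve_left fun hst => ht (hst ▸ hs)⟩
  · rw [erase_eq_of_notMem hs]
    exact ⟨Or.inl, fun h => h.resolve_right fun hst => hs (hst ▸ mem_insert_self a t)⟩

theorem forall_last_iff_natAdd {α : Type*} {a d : ℕ} (hd : 0 < d) (Q : α → Prop)
    (B : Fin (a + d) → α) :
    (∀ i : Fin (a + d), (i : ℕ) + 1 = a + d → Q (B i)) ↔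
      ∀ i : Fin d, (i : ℕ) + 1 = d → Q (B (Fin.natAdd a i)) := by
  constructor
  · intro h i hi
    exact h _ (by simp; omega)
  · intro h i hi
    convert h ⟨d - 1, by omega⟩ (by simp only; omega)
    ext
    simp
    omega

section Descents

variable {α : Type*} [LinearOrder α]

/-- Descents are numbered `1, …, n - 1` as in `shuffleD'DescentSet`: `q` is a descent when
`B q < B (q - 1)`, with `Fin n` counting letters from `0`. -/
def descentSet {n : ℕ} (B : Fin n → α) : Finset ℕ :=
  (univ.filter fun i : Fin n => ∃ h : (i : ℕ) + 1 < n, B ⟨i + 1, h⟩ < B i).image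
    fun i : Fin n => (i : ℕ) + 1

theorem mem_descentSet {n q : ℕ} {B : Fin n → α} :
    q ∈ descentSet B ↔ ∃ (h : q < n) (h0 : 0 < q), B ⟨q, h⟩ < B ⟨q - 1, by omega⟩ := by
  simp only [descentSet, mem_image, mem_filter, mem_univ, true_and]
  constructor
  · rintro ⟨i, ⟨h, hlt⟩, rfl⟩
    exact ⟨h, by omega, hlt⟩
  · rintro ⟨h, h0, hlt⟩
    refine ⟨⟨q - 1, by omega⟩, ⟨by simp only; omega, ?_⟩, by simp only; omega⟩
    convert hlt using 3
    simp only
    omega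

theorem descentSet_eq_empty_iff {n : ℕ} {B : Fin n → α} : descentSet B = ∅ ↔ Monotone B := by
  simp only [Finset.eq_empty_iff_forall_notMem, mem_descentSet, not_exists, not_lt]
  constructor
  · intro h
    cases n with
    | zero => exact fun i => i.elim0
    | succ n =>
      refine Fin.monotone_iff_le_succ.mpr fun i => ?_
      exact h (i + 1) (by omega) (by omega)
  · intro h q hq h0
    exact h (Fin.le_def.mpr (by simp only; omega))

theorem descentSet_erase_eq {a d : ℕ} (B : Fin (a + d) → α) :
    (descentSet B).erase a = descentSet (fun i => B (Fin.castAdd d i)) ∪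
      (descentSet fun i => B (Fin.natAdd a i)).map (addLeftEmbedding a) := by
  ext q
  simp only [mem_erase, mem_union, mem_map, mem_descentSet, addLeftEmbedding_apply]
  constructor
  · rintro ⟨hqa, hq, hq0, hlt⟩
    rcases Nat.lt_or_gt_of_ne hqa with h | h
    · exact Or.inl ⟨h, hq0, hlt⟩
    · refine Or.inr ⟨q - a, ⟨by omega, by omega, ?_⟩, by omega⟩
      convert hlt using 2 <;> ext <;> (simp; omega)
  · rintro (⟨h, hq0, hlt⟩ | ⟨q', ⟨h, hq0, hlt⟩, rfl⟩)
    · exact ⟨by omega, by omega, hq0, hlt⟩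
    · refine ⟨by omega, by omega, by omega, ?_⟩
      convert hlt using 2 <;> ext <;> simp; omega

variable (α) in
def descentCount [Fintype α] (n : ℕ) (S : Finset ℕ) (Q : α → Prop) : ℕ :=
  #{B : Fin n → α | descentSet B = S ∧ ∀ i : Fin n, (i : ℕ) + 1 = n → Q (B i)}

theorem descentCount_add_descentCount_insert [Fintype α] {a d : ℕ} (hd : 0 < d) {S : Finset ℕ}
    (hS : ∀ x ∈ S, x < a) (Q : α → Prop) :
    descentCount α (a + d) S Q + descentCount α (a + d) (insert a S) Q =
      descentCount α a S (fun _ => True) * descentCount α d ∅ Q := by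
  have haS : a ∉ S := fun h => (hS a h).false
  have hsplit : descentCount α (a + d) S Q + descentCount α (a + d) (insert a S) Q =
      #{B : Fin (a + d) → α | (descentSet B).erase a = S ∧
        ∀ i : Fin (a + d), (i : ℕ) + 1 = a + d → Q (B i)} := by
    rw [descentCount, descentCount, ← card_union_of_disjoint, ← filter_or]
    · congr! 2 with B
      rw [Finset.erase_eq_iff_eq_or_eq_insert haS, or_and_right]
    · refine disjoint_filter.mpr fun B _ h1 h2 => haS ?_
      rw [← h1.1, h2.1]
      exact mem_insert_self a S
  rw [hsplit, descentCount, descentCount, ← card_product, ← filter_product, univ_product_univ]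
  refine card_equiv (Fin.appendEquiv a d).symm fun B => ?_
  simp only [mem_filter, mem_univ, true_and, Fin.appendEquiv_symm_apply]
  simp only [descentSet_erase_eq, forall_last_iff_natAdd hd, implies_true, and_true, ← and_assoc]
  refine and_congr_left' ⟨fun h => ?_, ?_⟩
  · have hright : (descentSet fun i => B (Fin.natAdd a i)) = ∅ := by
      refine eq_empty_of_forall_notMem fun q hq => ?_
      have := hS (a + q) (h ▸ mem_union_right _ (mem_map_of_mem _ hq))
      obtain ⟨-, hq0, -⟩ := mem_descentSet.mp hq
      omega
    rw [hright, map_empty, union_empty] at h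
    exact ⟨h, hright⟩
  · rintro ⟨h1, h2⟩
    rw [h1, h2, map_empty, union_empty]

end Descents

theorem descentCount_empty_le {b v : ℕ} (hv : v < b) (d : ℕ) :
    descentCount (Fin b) d ∅ (fun x => (x : ℕ) ≤ v) = (v + d).choose d := by
  rw [descentCount, ← card_monotone_le hv d]
  congr! 2 with B
  rw [descentSet_eq_empty_iff]
  refine and_congr_right fun hB => ⟨fun h i => ?_, fun h i _ => h i⟩
  have hi := i.isLt
  exact (Fin.le_def.mp (hB (Fin.le_def.mpr (by simp only; omega) : i ≤ ⟨d - 1, by omega⟩))).trans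
    (h ⟨d - 1, by omega⟩ (by simp only; omega))

theorem descentCount_empty_true {b : ℕ} (hb : 0 < b) (d : ℕ) :
    descentCount (Fin b) d ∅ (fun _ => True) = (d + b - 1).choose (b - 1) := by
  have := descentCount_empty_le (show b - 1 < b by omega) d
  rw [show d + b - 1 = b - 1 + d by omega, Nat.choose_symm_add, ← this]
  congr! 3 with x
  simp only [true_iff]
  omega

theorem zchoose_natCast (x r : ℕ) : zchoose x r = x.choose r := by
  simp [zchoose]

theorem zchoose_eq_zero {a : ℤ} {r : ℕ} (h : a < r) : zchoose a r = 0 := by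
  unfold zchoose
  split_ifs
  · exact Nat.choose_eq_zero_of_lt (by omega)
  · rfl

theorem Matrix.det_of_lastRow_eq_zero_except_last_two {R : Type*} [CommRing R] {m : ℕ}
    (M : Matrix (Fin (m + 2)) (Fin (m + 2)) R)
    (h : ∀ j : Fin m, M (Fin.last _) j.castSucc.castSucc = 0) :
    M.det = M (Fin.last _) (Fin.last _) * (M.submatrix Fin.castSucc Fin.castSucc).det -
      M (Fin.last _) (Fin.last m).castSucc *
        (M.submatrix Fin.castSucc (Fin.last m).castSucc.succAbove).det := by
  rw [Matrix.det_succ_row M (Fin.last _), Fin.sum_univ_castSucc, Fin.sum_univ_castSucc,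
    Finset.sum_eq_zero fun j _ => by rw [h j, mul_zero, zero_mul], Fin.succAbove_last]
  simp only [Fin.val_last, Fin.val_castSucc]
  rw [show m + 1 + m = 2 * m + 1 by ring, show m + 1 + (m + 1) = 2 * (m + 1) by ring,
    pow_succ, pow_mul, pow_mul]
  norm_num
  ring

/-- The matrix `f′` of the theorem for the chain `u 0 < ⋯ < u m` and length `N`, with the
entries `T (N - u i)` of its last column left general. -/
def chainMatrix (R : Type*) [CommRing R] (b : ℕ) (T : ℤ → R) (N : ℕ) (u : ℕ → ℕ) (m : ℕ) :
    Matrix (Fin (m + 1)) (Fin (m + 1)) R :=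
  Matrix.of fun i j => if (j : ℕ) = m then T ((N : ℤ) - u i)
    else (zchoose ((u ((j : ℕ) + 1) : ℤ) - u i + b - 1) (b - 1) : R)

section ChainMatrix

variable {R : Type*} [CommRing R] {b : ℕ} {T : ℤ → R} {N : ℕ} {u : ℕ → ℕ} {m : ℕ}

theorem chainMatrix_submatrix_castSucc_castSucc :
    (chainMatrix R b T N u (m + 1)).submatrix Fin.castSucc Fin.castSucc =
      chainMatrix R b (fun z => (zchoose (z + b - 1) (b - 1) : R)) (u (m + 1)) u m := by
  ext i j
  simp only [chainMatrix, Matrix.submatrix_apply, Matrix.of_apply, Fin.val_castSucc]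
  split_ifs with h1 h2 h2
  · omega
  · omega
  · rw [h2]
  · rfl

theorem chainMatrix_submatrix_castSucc_succAbove :
    (chainMatrix R b T N u (m + 1)).submatrix Fin.castSucc (Fin.last m).castSucc.succAbove =
      chainMatrix R b T N u m := by
  ext i j
  simp only [chainMatrix, Matrix.submatrix_apply, Matrix.of_apply, Fin.val_castSucc]
  rcases Nat.lt_or_ge (j : ℕ) m with hj | hj
  · rw [Fin.succAbove_of_castSucc_lt _ _ (by simpa [Fin.lt_def] using hj)]
    simp [hj.ne, show (j : ℕ) ≠ m + 1 by omega]
  · rw [Fin.succAbove_of_le_castSucc _ _ (by simp [Fin.le_def]; omega)]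
    simp [show (j : ℕ) = m by omega]

theorem det_chainMatrix_succ (hb : 0 < b) (hu : StrictMonoOn u (Set.Iic (m + 1))) :
    (chainMatrix R b T N u (m + 1)).det =
      T ((N : ℤ) - u (m + 1)) *
          (chainMatrix R b (fun z => (zchoose (z + b - 1) (b - 1) : R)) (u (m + 1)) u m).det -
        (chainMatrix R b T N u m).det := by
  have hlast (j : ℕ) (hj : j ≤ m) : u j < u (m + 1) :=
    hu (Set.mem_Iic.mpr (by omega)) (Set.mem_Iic.mpr le_rfl) (by omega)
  rw [Matrix.det_of_lastRow_eq_zero_except_last_two, chainMatrix_submatrix_castSucc_castSucc,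
    chainMatrix_submatrix_castSucc_succAbove]
  · have hdiag : chainMatrix R b T N u (m + 1) (Fin.last _) (Fin.last m).castSucc = 1 := by
      simp only [chainMatrix, Matrix.of_apply, Fin.val_last, Fin.val_castSucc]
      rw [if_neg (by omega), show ((u (m + 1) : ℤ) - u (m + 1) + b - 1) = ((b - 1 : ℕ) : ℤ) by
        omega, zchoose_natCast, Nat.choose_self, Nat.cast_one]
    rw [hdiag, one_mul]
    simp [chainMatrix]
  · intro j
    simp only [chainMatrix, Matrix.of_apply, Fin.val_last, Fin.val_castSucc]
    have := hlast (j + 1) j.isLt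
    rw [if_neg (by omega), zchoose_eq_zero (by omega), Nat.cast_zero]

end ChainMatrix

theorem descentCount_image_Icc_eq_det {R : Type*} [CommRing R] {b : ℕ} (hb : 0 < b) {u : ℕ → ℕ}
    (hu0 : u 0 = 0) (m : ℕ) (hu : StrictMonoOn u (Set.Iic m)) (Q : Fin b → Prop) (T : ℤ → R)
    (hT : ∀ d : ℕ, 0 < d → T d = descentCount (Fin b) d ∅ Q) (N : ℕ) (hN : u m < N) :
    (descentCount (Fin b) N ((Icc 1 m).image u) Q : R) = (chainMatrix R b T N u m).det := by
  induction m generalizing Q T N with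
  | zero => simp [chainMatrix, hT N (by omega), hu0]
  | succ m ih =>
    have hum : StrictMonoOn u (Set.Iic m) := hu.mono (Set.Iic_subset_Iic.mpr (by omega))
    have hlast : u m < u (m + 1) := hu (by simp) (by simp) (by omega)
    have hS : ∀ x ∈ (Icc 1 m).image u, x < u (m + 1) := by
      simp only [mem_image, mem_Icc]
      rintro _ ⟨j, ⟨-, hj⟩, rfl⟩
      exact hu (Set.mem_Iic.mpr (by omega)) (by simp) (by omega)
    have hsplit := descentCount_add_descentCount_insert (α := Fin b) (a := u (m + 1))
      (d := N - u (m + 1)) (by omega) hS Q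
    rw [Nat.add_sub_cancel' hN.le, ← image_insert, insert_Icc_right_eq_Icc_add_one (by omega)]
      at hsplit
    rw [det_chainMatrix_succ hb hu,
      ← ih hum (fun _ => True) _ (fun d hd => ?_) (u (m + 1)) hlast,
      ← ih hum Q T (fun d hd => hT d hd) N (by omega),
      show ((N : ℤ) - u (m + 1)) = ((N - u (m + 1) : ℕ) : ℤ) by omega, hT _ (by omega),
      eq_sub_iff_add_eq, ← Nat.cast_mul, ← Nat.cast_add, add_comm, hsplit, mul_comm]
    rw [descentCount_empty_true hb, ← zchoose_natCast,
      show ((d + b - 1 : ℕ) : ℤ) = d + b - 1 by omega]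

theorem Nat.mul_add_lt_mul_add_iff {c q q' r r' : ℕ} (hq : q < c) (hq' : q' < c) :
    r * c + q < r' * c + q' ↔ r < r' ∨ r = r' ∧ q < q' := by
  constructor
  · intro h
    rcases lt_trichotomy r r' with hr | rfl | hr
    · exact Or.inl hr
    · exact Or.inr ⟨rfl, by omega⟩
    · nlinarith
  · rintro (hr | ⟨rfl, hq⟩)
    · nlinarith
    · omega

theorem Nat.lt_iff_div_lt_div_of_mod_eq {p x y : ℕ} (hp : 0 < p) (h : x % p = y % p) :
    x < y ↔ x / p < y / p := by
  have hx := Nat.div_add_mod x p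
  have hy := Nat.div_add_mod y p
  have hmod := Nat.mod_lt y hp
  constructor
  · intro hxy
    by_contra hle
    have := Nat.mul_le_mul_left p (not_lt.mp hle)
    omega
  · intro hlt
    have := Nat.mul_le_mul_left p hlt
    rw [Nat.mul_succ] at this
    omega

def colorRank (p c a : ℕ) : ℕ := a % p * c + a / p

section ColorRank

variable {p c b : ℕ}

theorem pos_of_add_one_eq_mul (hb : b + 1 = p * c) : 0 < p ∧ 0 < c :=
  CanonicallyOrderedAdd.mul_pos.mp (hb ▸ Nat.add_one_pos b)

theorem colorRank_lt_colorRank_iff (hp : 0 < p) {x y : ℕ} (hx : x / p < c) (hy : y / p < c) :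
    colorRank p c x < colorRank p c y ↔ x % p < y % p ∨ x % p = y % p ∧ x < y := by
  rw [colorRank, colorRank, Nat.mul_add_lt_mul_add_iff hx hy]
  exact or_congr_right (and_congr_right fun h => (Nat.lt_iff_div_lt_div_of_mod_eq hp h).symm)

theorem div_lt_of_lt (hb : b + 1 = p * c) {x : ℕ} (hx : x < b) : x / p < c := by
  rw [Nat.div_lt_iff_lt_mul (pos_of_add_one_eq_mul hb).1, mul_comm]
  omega

theorem colorRank_lt (hb : b + 1 = p * c) {x : ℕ} (hx : x < b) : colorRank p c x < b := by
  obtain ⟨hp, hc⟩ := pos_of_add_one_eq_mul hb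
  obtain ⟨p, rfl⟩ : ∃ p', p = p' + 1 := ⟨p - 1, by omega⟩
  have hr : x % (p + 1) ≤ p := Nat.le_of_lt_succ (Nat.mod_lt x hp)
  have hx' := Nat.div_add_mod x (p + 1)
  unfold colorRank
  rcases hr.lt_or_eq with hr | hr
  · have := Nat.mul_le_mul_right c hr
    nlinarith
  · rw [hr] at hx' ⊢
    have : x / (p + 1) + 1 < c := by
      refine Nat.lt_of_mul_lt_mul_left (a := p + 1) ?_
      nlinarith
    nlinarith

theorem lt_colorRank_iff (hp : 2 ≤ p) (hb : b + 1 = p * c) {x : ℕ} (hx : x < b) :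
    b - c < colorRank p c x ↔ x % p = p - 1 := by
  have hq := div_lt_of_lt hb hx
  obtain ⟨p, rfl⟩ : ∃ p', p = p' + 2 := ⟨p - 2, by omega⟩
  have hr : x % (p + 2) ≤ p + 1 := Nat.le_of_lt_succ (Nat.mod_lt x (by omega))
  have hpc : (p + 2) * c = p * c + 2 * c := by ring
  unfold colorRank
  generalize x / (p + 2) = q at *
  generalize x % (p + 2) = r at *
  constructor
  · intro h
    by_contra hne
    have := Nat.mul_le_mul_right c (show r ≤ p by omega)
    omega
  · intro h
    have : (p + 2 - 1) * c = p * c + c := by rw [show p + 2 - 1 = p + 1 by omega]; ring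
    rw [h, this]
    omega

theorem colorRank_injOn (hb : b + 1 = p * c) {x y : ℕ} (hx : x < b) (hy : y < b)
    (h : colorRank p c x = colorRank p c y) : x = y := by
  have hp := (pos_of_add_one_eq_mul hb).1
  have hxy := (colorRank_lt_colorRank_iff hp (div_lt_of_lt hb hx) (div_lt_of_lt hb hy)).not.mp
    h.not_lt
  have hyx := (colorRank_lt_colorRank_iff hp (div_lt_of_lt hb hy) (div_lt_of_lt hb hx)).not.mp
    h.symm.not_lt
  omega

def colorRankEquiv (hb : b + 1 = p * c) : Fin b ≃ Fin b :=
  Equiv.ofBijective (fun x => ⟨colorRank p c x, colorRank_lt hb x.isLt⟩)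
    (Finite.injective_iff_bijective.mp fun x y h =>
      Fin.ext (colorRank_injOn hb x.isLt y.isLt (Fin.val_eq_of_eq h)))

theorem colorRankEquiv_apply (hb : b + 1 = p * c) (x : Fin b) :
    (colorRankEquiv hb x : ℕ) = colorRank p c x := rfl

end ColorRank

theorem card_filter_le_lt_card_filter_le_iff {ι β : Type*} [Fintype ι] [LinearOrder β]
    (f : ι → β) (i j : ι) : #{l | f l ≤ f j} < #{l | f l ≤ f i} ↔ f j < f i := by
  have hmono {x y : β} (hxy : x ≤ y) :
      (univ.filter fun l => f l ≤ x) ⊆ univ.filter fun l => f l ≤ y := by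
    intro l
    simp only [mem_filter, mem_univ, true_and]
    exact fun hl => hl.trans hxy
  constructor
  · intro h
    by_contra hle
    exact h.not_ge (card_le_card (hmono (not_lt.mp hle)))
  · intro h
    exact card_lt_card ((ssubset_iff_of_subset (hmono h.le)).mpr ⟨i, by simp, by simpa using h⟩)

theorem shufflePos_eq_card {n b : ℕ} (A : Fin n → Fin b) (i : Fin n) :
    shufflePos A i = #{l | toLex (A l, l) ≤ toLex (A i, i)} := by
  simp only [shufflePos, Prod.Lex.toLex_le_toLex]

theorem shufflePos_lt_shufflePos_iff {n b : ℕ} (A : Fin n → Fin b) {i j : Fin n} (hij : i < j) :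
    shufflePos A j < shufflePos A i ↔ A j < A i := by
  rw [shufflePos_eq_card, shufflePos_eq_card,
    card_filter_le_lt_card_filter_le_iff (fun l => toLex (A l, l)), Prod.Lex.toLex_lt_toLex]
  exact or_iff_left fun h => h.2.not_gt hij

section Shuffle

variable {p c b n : ℕ}

theorem shuffleHasD'DescentAt_iff_of_lt (hb : b + 1 = p * c) (A : Fin n → Fin b) (i : Fin n)
    (h : (i : ℕ) + 1 < n) :
    shuffleHasD'DescentAt p A i ↔ colorRankEquiv hb (A ⟨i + 1, h⟩) < colorRankEquiv hb (A i) := by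
  have hp := (pos_of_add_one_eq_mul hb).1
  rw [shuffleHasD'DescentAt, dif_pos h, Fin.lt_def, colorRankEquiv_apply, colorRankEquiv_apply,
    colorRank_lt_colorRank_iff hp (div_lt_of_lt hb (A _).isLt) (div_lt_of_lt hb (A _).isLt),
    sigmaLt', shufflePair, shufflePair, shuffleCol, shuffleCol, ZMod.val_natCast,
    ZMod.val_natCast, ZMod.natCast_eq_natCast_iff',
    shufflePos_lt_shufflePos_iff A (Fin.lt_def.mpr (Nat.lt_succ_self _)), Fin.lt_def]

theorem shuffleHasD'DescentAt_iff_of_not_lt (hp : 2 ≤ p) (hb : b + 1 = p * c)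
    (A : Fin n → Fin b) (i : Fin n) (h : ¬(i : ℕ) + 1 < n) :
    shuffleHasD'DescentAt p A i ↔ b - c < colorRankEquiv hb (A i) := by
  rw [shuffleHasD'DescentAt, dif_neg h, colorRankEquiv_apply, lt_colorRank_iff hp hb (A i).isLt,
    shuffleCol, ZMod.natCast_eq_natCast_iff', Nat.mod_eq_of_lt (show p - 1 < p by omega)]

theorem mem_shuffleD'DescentSet {A : Fin n → Fin b} {q : ℕ} :
    q ∈ shuffleD'DescentSet p A ↔ ∃ i : Fin n, shuffleHasD'DescentAt p A i ∧ (i : ℕ) + 1 = q := by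
  simp [shuffleD'DescentSet]

theorem shuffleD'DescentSet_eq_descentSet (hp : 2 ≤ p) (hb : b + 1 = p * c) (A : Fin n → Fin b)
    (hlast : ∀ i : Fin n, (i : ℕ) + 1 = n → (colorRankEquiv hb (A i) : ℕ) ≤ b - c) :
    shuffleD'DescentSet p A = descentSet (colorRankEquiv hb ∘ A) := by
  ext q
  simp only [mem_shuffleD'DescentSet, descentSet, mem_image, mem_filter, mem_univ, true_and,
    Function.comp_apply]
  refine exists_congr fun i => and_congr_left fun _ => ?_
  by_cases h : (i : ℕ) + 1 < n
  · rw [shuffleHasD'DescentAt_iff_of_lt hb A i h]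
    exact ⟨fun hlt => ⟨h, hlt⟩, fun ⟨_, hlt⟩ => hlt⟩
  · rw [shuffleHasD'DescentAt_iff_of_not_lt hp hb A i h]
    have := hlast i (by omega)
    exact ⟨fun hlt => by omega, fun ⟨h', _⟩ => absurd h' h⟩

theorem shuffleD'DescentSet_eq_iff (hp : 2 ≤ p) (hb : b + 1 = p * c) {S : Finset ℕ}
    (hS : ∀ q ∈ S, q < n) (A : Fin n → Fin b) :
    shuffleD'DescentSet p A = S ↔ descentSet (colorRankEquiv hb ∘ A) = S ∧
      ∀ i : Fin n, (i : ℕ) + 1 = n → (colorRankEquiv hb (A i) : ℕ) ≤ b - c := by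
  constructor
  · intro hA
    have hlast : ∀ i : Fin n, (i : ℕ) + 1 = n → (colorRankEquiv hb (A i) : ℕ) ≤ b - c := by
      intro i hi
      by_contra hlt
      have hmem : n ∈ shuffleD'DescentSet p A := mem_shuffleD'DescentSet.mpr
        ⟨i, (shuffleHasD'DescentAt_iff_of_not_lt hp hb A i (by omega)).mpr (by omega), hi⟩
      exact (hS n (hA ▸ hmem)).false
    exact ⟨shuffleD'DescentSet_eq_descentSet hp hb A hlast ▸ hA, hlast⟩
  · rintro ⟨hA, hlast⟩
    rw [shuffleD'DescentSet_eq_descentSet hp hb A hlast, hA]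

theorem card_shuffleD'DescentSet_eq (hp : 2 ≤ p) (hb : b + 1 = p * c) {S : Finset ℕ}
    (hS : ∀ q ∈ S, q < n) :
    #{A : Fin n → Fin b | shuffleD'DescentSet p A = S} =
      descentCount (Fin b) n S (fun x => (x : ℕ) ≤ b - c) := by
  refine card_equiv ((Equiv.refl _).arrowCongr (colorRankEquiv hb)) fun A => ?_
  simp only [mem_filter, mem_univ, true_and, shuffleD'DescentSet_eq_iff hp hb hS]
  rfl

end Shuffle

theorem statement2_general (p c n k : ℕ) (hp : 2 ≤ p)
    (b : ℕ) (hb : b + 1 = p * c)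
    (s : ℕ → ℕ) (hs0 : s 0 = 0) (hmono : ∀ i, i ≤ k → s i < s (i + 1))
    (hlast : s (k + 1) = n) :
    ((Finset.univ.filter fun A : Fin n → Fin b =>
        shuffleD'DescentSet p A = (Finset.Icc 1 k).image s).card : ℝ) / (b : ℝ) ^ n
      = ((b : ℝ) ^ n)⁻¹ *
        (Matrix.of fun i j : Fin (k + 1) =>
          if (j : ℕ) = k then (zchoose ((n : ℤ) - s (i : ℕ) + (b - c : ℕ)) (b - c) : ℝ)
          else (zchoose ((s ((j : ℕ) + 1) : ℤ) - s (i : ℕ) + b - 1) (b - 1) : ℝ)).det := by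
  have hc : 0 < c := (pos_of_add_one_eq_mul hb).2
  have hcb : c < b + 1 := by rw [hb]; nlinarith
  have hs : StrictMonoOn s (Set.Iic (k + 1)) :=
    strictMonoOn_Iic_of_lt_succ fun i hi => by
      simpa using hmono i (Order.lt_succ_iff.mp (by simpa using hi))
  have hS : ∀ q ∈ (Icc 1 k).image s, q < n := by
    simp only [mem_image, mem_Icc]
    rintro _ ⟨j, ⟨-, hj⟩, rfl⟩
    exact hlast ▸ hs (Set.mem_Iic.mpr (by omega)) (Set.mem_Iic.mpr le_rfl) (by omega)
  rw [card_shuffleD'DescentSet_eq hp hb hS, div_eq_inv_mul,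
    descentCount_image_Icc_eq_det (by omega) hs0 k (hs.mono (Set.Iic_subset_Iic.mpr k.le_succ))
      _ (fun z => (zchoose (z + (b - c : ℕ)) (b - c) : ℝ)) (fun d _ => ?_) n
      (hlast ▸ hmono k le_rfl)]
  · rfl
  · rw [descentCount_empty_le (by omega) d, ← Nat.cast_add, zchoose_natCast, add_comm,
      Nat.choose_symm_add]

/-- **Theorem (determinantal formula for the `(b,n,p)`-shuffle, `b = pc - 1`, case `s_k < n`).**
For `b = pc - 1` and `0 = s_0 < s_1 < ⋯ < s_k < n`, `s_{k+1} := n`, the probability that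
the d′-descent set of the `(b,n,p)`-shuffle equals `{s_1,…,s_k}` is
`b⁻ⁿ · det(f′(i,j))` with `f′(i,j) = binom(s_{j+1} - s_i + b - 1, b-1)` for `j < k` and
`f′(i,k) = binom(n - s_i + b - c, b - c)`. -/
theorem statement2 (p c n k : ℕ) (hp : 2 ≤ p) (hc : 1 ≤ c) (hn : 1 ≤ n)
    (b : ℕ) (hb : b + 1 = p * c)
    (s : ℕ → ℕ) (hs0 : s 0 = 0) (hmono : ∀ i, i ≤ k → s i < s (i + 1))
    (hlast : s (k + 1) = n) :
    ((Finset.univ.filter fun A : Fin n → Fin b =>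
        shuffleD'DescentSet p A = (Finset.Icc 1 k).image s).card : ℝ) / (b : ℝ) ^ n
      = ((b : ℝ) ^ n)⁻¹ *
        (Matrix.of fun i j : Fin (k + 1) =>
          if (j : ℕ) = k then (zchoose ((n : ℤ) - s (i : ℕ) + (b - c : ℕ)) (b - c) : ℝ)
          else (zchoose ((s ((j : ℕ) + 1) : ℤ) - s (i : ℕ) + b - 1) (b - 1) : ℝ)).det :=
  statement2_general p c n k hp b hb s hs0 hmono hlast
end
end

section
/- Let p ≥ 1 and let σ be chosen uniformly at random from G_{p,n}. Let 0 = s_0 < s_1 < ⋯ < s_k < n and set s_{k+1} := n. Then the probability that the set of d-descents of σ equals {s_1,…,s_k} is det( g(i,j) )_{i,j = 0,…,k}, where g(i,j) = 1/(s_{j+1} − s_i)! for 0 ≤ i ≤ k and 0 ≤ j ≤ k−1, and g(i,k) = (1/p)^{n − s_i} / (n − s_i)! for 0 ≤ i ≤ k. -/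
/-!
Write `N_p(n, T)` for the number of `σ ∈ G_{p,n}` with d-descent set `T`. For `t ≤ n` and
`T ⊆ {1, …, t-1}`, the `σ` with descent set `T` or `T ∪ {t}` are those without d-descents
after position `t` whose descents before `t` form `T`. Such a `σ` is determined by its first
`t` colored letters, because its remaining letters must then have color `0` and increase.
Sorting these `t` letters for the order on `Σ` writes them uniquely as an increasing colored
word (of which there are `C(n,t) p^t`) composed with a permutation of `{1, …, t}` with descent
set `T`. Hence `N_p(n, T ∪ {t}) + N_p(n, T) = C(n,t) p^t N_1(t, T)`. Expanding the determinant
along its last row gives the same recursion, and the formula follows by induction on `k`.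
-/

open scoped Classical

noncomputable section

/-- `1/m!` for an integer `m`, taken to be `0` for negative `m`. -/
def invFact (m : ℤ) : ℝ := if 0 ≤ m then ((m.toNat).factorial : ℝ)⁻¹ else 0

/-- An element of `G_{p,n}`, given by its permutation part and its colors;
`σ` is determined by the pairs `(σ(i), σ_c(i))`. -/
abbrev ColoredPerm (p n : ℕ) := Equiv.Perm (Fin n) × (Fin n → ZMod p)

/-- The pair `(σ(i), σ_c(i)) ∈ {1,…,n} × Z_p`. -/
def cpPair {p n : ℕ} (σ : ColoredPerm p n) (i : Fin n) : ℕ × ZMod p :=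
  ((σ.1 i : ℕ) + 1, σ.2 i)

/-- `σ ∈ G_{p,n}` has a d-descent at position `i+1` (positions are `1,…,n`):
for positions `< n` this means `(σ(i),σ_c(i)) > (σ(i+1),σ_c(i+1))`,
and at position `n` it means `σ_c(n) ≠ 0`. -/
def cpHasDDescentAt {p n : ℕ} (σ : ColoredPerm p n) (i : Fin n) : Prop :=
  if h : (i : ℕ) + 1 < n then
    sigmaLt p (cpPair σ ⟨(i : ℕ) + 1, h⟩) (cpPair σ i)
  else σ.2 i ≠ 0

/-- The set of d-descent positions (a subset of `{1,…,n}`) of `σ ∈ G_{p,n}`. -/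
def cpDDescentSet {p n : ℕ} (σ : ColoredPerm p n) : Finset ℕ :=
  (Finset.univ.filter fun i : Fin n => cpHasDDescentAt σ i).image fun i => (i : ℕ) + 1

/-- `σ ∈ G_{p,n}` has a d′-descent at position `i+1` (positions are `1,…,n`):
for positions `< n` this means `(σ(i),σ_c(i)) >′ (σ(i+1),σ_c(i+1))`,
and at position `n` it means `σ_c(n) = p - 1`. -/
def cpHasD'DescentAt {p n : ℕ} (σ : ColoredPerm p n) (i : Fin n) : Prop :=
  if h : (i : ℕ) + 1 < n then
    sigmaLt' (cpPair σ ⟨(i : ℕ) + 1, h⟩) (cpPair σ i)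
  else σ.2 i = ((p - 1 : ℕ) : ZMod p)

/-- The set of d′-descent positions (a subset of `{1,…,n}`) of `σ ∈ G_{p,n}`. -/
def cpD'DescentSet {p n : ℕ} (σ : ColoredPerm p n) : Finset ℕ :=
  (Finset.univ.filter fun i : Fin n => cpHasD'DescentAt σ i).image fun i => (i : ℕ) + 1

open Finset
open scoped Nat

def sigmaKey (p : ℕ) (x : ℕ × ZMod p) : ℕ ×ₗ ℕ := toLex (rho p x.2, x.1)

lemma sigmaLt_iff_sigmaKey_lt {p : ℕ} {x y : ℕ × ZMod p} :
    sigmaLt p x y ↔ sigmaKey p x < sigmaKey p y := by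
  rw [sigmaLt, sigmaKey, sigmaKey, Prod.Lex.toLex_lt_toLex]

lemma rho_zero (p : ℕ) : rho p 0 = 0 := if_pos rfl

lemma rho_eq_zero_iff {p : ℕ} [NeZero p] {r : ZMod p} : rho p r = 0 ↔ r = 0 := by
  refine ⟨fun h => ?_, fun h => h ▸ rho_zero p⟩
  by_contra hr
  have := ZMod.val_lt r
  have := (ZMod.val_ne_zero r).2 hr
  simp only [rho, if_neg hr] at h
  omega

def wordDescents {β : Type*} [LT β] {m : ℕ} (u : Fin m → β) : Finset ℕ :=
  (univ.filter fun i : Fin m => ∃ h : (i : ℕ) + 1 < m, u ⟨i + 1, h⟩ < u i).image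
    fun i : Fin m => (i : ℕ) + 1

lemma wordDescents_comp_of_strictMono {α β : Type*} [LinearOrder α] [Preorder β] {f : α → β}
    (hf : StrictMono f) {m : ℕ} (u : Fin m → α) : wordDescents (f ∘ u) = wordDescents u := by
  ext q
  simp only [wordDescents, mem_image, mem_filter, Function.comp_apply, hf.lt_iff_lt]

lemma Tuple.sort_comp_perm_of_strictMono {m : ℕ} {β : Type*} [LinearOrder β] {u : Fin m → β}
    (hu : StrictMono u) (π : Equiv.Perm (Fin m)) : Tuple.sort (u ∘ π) = π⁻¹ := by
  refine (Tuple.eq_sort_iff.2 ⟨?_, fun i j hij h => ?_⟩).symm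
  · simpa [Function.comp_def] using hu.monotone
  · exact absurd (by simpa using hu.injective h) hij.ne

lemma Tuple.strictMono_comp_sort {m : ℕ} {β : Type*} [LinearOrder β] {u : Fin m → β}
    (hu : Function.Injective u) : StrictMono (u ∘ Tuple.sort u) :=
  (Tuple.monotone_sort u).strictMono_of_injective (hu.comp (Equiv.injective _))

section NoDescentAfter

variable {p n t : ℕ} {σ : ColoredPerm p n}

lemma mem_cpDDescentSet {q : ℕ} :
    q ∈ cpDDescentSet σ ↔ ∃ i : Fin n, cpHasDDescentAt σ i ∧ (i : ℕ) + 1 = q := by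
  simp [cpDDescentSet]

lemma not_cpHasDDescentAt_of_le (hσ : ∀ q ∈ cpDDescentSet σ, q ≤ t) {i : Fin n}
    (hi : t ≤ i) : ¬ cpHasDDescentAt σ i := fun hd => by
  have := hσ _ (mem_cpDDescentSet.2 ⟨i, hd, rfl⟩)
  omega

lemma sigmaKey_cpPair_lt_succ {i : Fin n} (hi : (i : ℕ) + 1 < n)
    (hd : ¬ cpHasDDescentAt σ i) :
    sigmaKey p (cpPair σ i) < sigmaKey p (cpPair σ ⟨i + 1, hi⟩) := by
  rw [cpHasDDescentAt, dif_pos hi, sigmaLt_iff_sigmaKey_lt, not_lt] at hd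
  refine hd.lt_of_ne fun h => ?_
  have := σ.1.injective <| Fin.ext <| by
    simpa [sigmaKey, cpPair] using congrArg (fun x => (ofLex x).2) h
  simp [Fin.ext_iff] at this

lemma sigmaKey_cpPair_lt_of_le (hσ : ∀ q ∈ cpDDescentSet σ, q ≤ t) {i j : Fin n}
    (hi : t ≤ i) (hij : i < j) :
    sigmaKey p (cpPair σ i) < sigmaKey p (cpPair σ j) := by
  obtain ⟨j, hj⟩ := j
  replace hij : (i : ℕ) + 1 ≤ j := hij
  revert hj
  induction j, hij using Nat.le_induction with
  | base => exact fun hj => sigmaKey_cpPair_lt_succ hj (not_cpHasDDescentAt_of_le hσ hi)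
  | succ j hij ih =>
    exact fun hj => (ih (by omega)).trans (sigmaKey_cpPair_lt_succ (i := ⟨j, by omega⟩) hj
      (not_cpHasDDescentAt_of_le hσ (show t ≤ j by omega)))

lemma cpColor_eq_zero_of_le [NeZero p] (hσ : ∀ q ∈ cpDDescentSet σ, q ≤ t) {i : Fin n}
    (hi : t ≤ i) : σ.2 i = 0 := by
  have hn : (i : ℕ) ≤ n - 1 := by omega
  have hlast : σ.2 ⟨n - 1, by omega⟩ = 0 := by
    have := not_cpHasDDescentAt_of_le hσ (i := ⟨n - 1, by omega⟩) (by simp; omega)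
    rwa [cpHasDDescentAt, dif_neg (by simp; omega), not_not] at this
  rcases hn.eq_or_lt with h | h
  · rwa [show i = ⟨n - 1, by omega⟩ from Fin.ext h]
  · have hle : rho p (σ.2 i) ≤ rho p (σ.2 ⟨n - 1, by omega⟩) := (Prod.Lex.toLex_lt_toLex'.1
      (sigmaKey_cpPair_lt_of_le hσ hi (j := ⟨n - 1, by omega⟩) h)).1
    rw [hlast, rho_zero, nonpos_iff_eq_zero] at hle
    exact rho_eq_zero_iff.1 hle

lemma cpPerm_lt_of_le [NeZero p] (hσ : ∀ q ∈ cpDDescentSet σ, q ≤ t) {i j : Fin n}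
    (hi : t ≤ i) (hij : i < j) : σ.1 i < σ.1 j := by
  have h := sigmaKey_cpPair_lt_of_le hσ hi hij
  rw [sigmaKey, sigmaKey, Prod.Lex.toLex_lt_toLex] at h
  rcases h with h | ⟨-, h⟩
  · simp [cpPair, cpColor_eq_zero_of_le hσ hi, cpColor_eq_zero_of_le hσ (hi.trans hij.le),
      rho_zero] at h
  · exact Fin.lt_def.2 (by simpa [cpPair] using h)

end NoDescentAfter

/-- The possible first `t` colored letters `(σ(i), σ_c(i))` of an element of `G_{p,n}`. -/
abbrev ColoredInj (p n t : ℕ) := (Fin t ↪ Fin n) × (Fin t → ZMod p)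

section Extend

variable {p n t : ℕ}

def coloredWord (x : ColoredInj p n t) (i : Fin t) : ℕ ×ₗ ℕ :=
  sigmaKey p ((x.1 i : ℕ) + 1, x.2 i)

lemma coloredWord_injective (x : ColoredInj p n t) : Function.Injective (coloredWord x) :=
  fun i j h => x.1.injective <| Fin.ext <| by
    simpa [coloredWord, sigmaKey] using congrArg (fun y => (ofLex y).2) h

def complementEnum (e : Fin t ↪ Fin n) : Fin (n - t) ↪o Fin n :=
  (univ.map e)ᶜ.orderEmbOfFin (by simp [card_compl])

lemma complementEnum_notMem (e : Fin t ↪ Fin n) (x : Fin (n - t)) :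
    complementEnum e x ∉ univ.map e :=
  mem_compl.1 (orderEmbOfFin_mem _ _ x)

def extendFun (e : Fin t ↪ Fin n) (i : Fin n) : Fin n :=
  if h : (i : ℕ) < t then e ⟨i, h⟩ else complementEnum e ⟨i - t, by omega⟩

lemma extendFun_injective (e : Fin t ↪ Fin n) : Function.Injective (extendFun e) := by
  intro i j hij
  unfold extendFun at hij
  split_ifs at hij with hi hj hj
  · simpa [Fin.ext_iff] using e.injective hij
  · exact absurd (hij ▸ mem_map_of_mem e (mem_univ _)) (complementEnum_notMem e _)
  · exact absurd (hij ▸ mem_map_of_mem e (mem_univ _)) (complementEnum_notMem e _)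
  · have := (complementEnum e).injective hij
    simp only [Fin.ext_iff] at this ⊢
    omega

def ColoredInj.extend (x : ColoredInj p n t) : ColoredPerm p n :=
  (Equiv.ofBijective _ (extendFun_injective x.1).bijective_of_finite,
    fun i => if h : (i : ℕ) < t then x.2 ⟨i, h⟩ else 0)

def restrictPrefix (ht : t ≤ n) (σ : ColoredPerm p n) : ColoredInj p n t :=
  ((Fin.castLEEmb ht).trans σ.1.toEmbedding, σ.2 ∘ Fin.castLE ht)

lemma restrictPrefix_extend (ht : t ≤ n) (x : ColoredInj p n t) :
    restrictPrefix ht x.extend = x := by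
  refine Prod.ext (Function.Embedding.ext fun i => ?_) (funext fun i => ?_) <;>
    simp [restrictPrefix, ColoredInj.extend, extendFun]

lemma extend_restrictPrefix [NeZero p] (ht : t ≤ n) {σ : ColoredPerm p n}
    (hσ : ∀ q ∈ cpDDescentSet σ, q ≤ t) : (restrictPrefix ht σ).extend = σ := by
  have htail : (fun j : Fin (n - t) => σ.1 ⟨t + j, by omega⟩) =
      complementEnum (restrictPrefix ht σ).1 := by
    refine orderEmbOfFin_unique _ (fun j => ?_) fun a b hab => cpPerm_lt_of_le hσ (by simp) ?_
    · rw [mem_compl, mem_map]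
      rintro ⟨a, -, ha⟩
      have : (a : ℕ) = t + j := congrArg Fin.val (σ.1.injective ha)
      omega
    · exact Nat.add_lt_add_left hab t
  refine Prod.ext (Equiv.ext fun i => ?_) (funext fun i => ?_)
  · change extendFun _ i = σ.1 i
    unfold extendFun
    split_ifs with hi
    · rfl
    · rw [← htail]
      exact congrArg σ.1 (Fin.ext (by simp; omega))
  · simp only [ColoredInj.extend, restrictPrefix]
    split_ifs with hi
    · rfl
    · exact (cpColor_eq_zero_of_le hσ (by omega)).symm

lemma cpDDescentSet_extend_le (x : ColoredInj p n t) :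
    ∀ q ∈ cpDDescentSet x.extend, q ≤ t := by
  intro q hq
  obtain ⟨i, hd, rfl⟩ := mem_cpDDescentSet.1 hq
  by_contra! hi
  rw [cpHasDDescentAt] at hd
  split_ifs at hd with hn
  · have hmono := (complementEnum x.1).strictMono
      (show (⟨i - t, by omega⟩ : Fin (n - t)) < ⟨i + 1 - t, by omega⟩ by
        simp [Fin.lt_def]; omega)
    simp [sigmaLt, cpPair, ColoredInj.extend, extendFun, show ¬ (i : ℕ) < t by omega,
      show ¬ (i : ℕ) + 1 < t by omega] at hd
    omega
  · simp [ColoredInj.extend, show ¬ (i : ℕ) < t by omega] at hd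

lemma wordDescents_coloredWord_restrictPrefix (ht : t ≤ n) (σ : ColoredPerm p n) :
    wordDescents (coloredWord (restrictPrefix ht σ)) = (cpDDescentSet σ).filter (· < t) := by
  ext q
  simp only [wordDescents, mem_image, mem_filter, mem_univ, true_and, mem_cpDDescentSet]
  constructor
  · rintro ⟨i, ⟨h, hlt⟩, rfl⟩
    refine ⟨⟨Fin.castLE ht i, ?_, rfl⟩, h⟩
    rw [cpHasDDescentAt, dif_pos (by simp; omega), sigmaLt_iff_sigmaKey_lt]
    exact hlt
  · rintro ⟨⟨i, hd, rfl⟩, hq⟩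
    rw [cpHasDDescentAt, dif_pos (by omega), sigmaLt_iff_sigmaKey_lt] at hd
    exact ⟨⟨i, by omega⟩, ⟨hq, hd⟩, rfl⟩

end Extend

section Sorting

variable {p n t : ℕ}

def ColoredInj.permute (x : ColoredInj p n t) (π : Equiv.Perm (Fin t)) : ColoredInj p n t :=
  (π.toEmbedding.trans x.1, x.2 ∘ π)

lemma ColoredInj.permute_permute (x : ColoredInj p n t) (π π' : Equiv.Perm (Fin t)) :
    (x.permute π).permute π' = x.permute (π * π') := rfl

lemma ColoredInj.permute_one (x : ColoredInj p n t) : x.permute 1 = x := rfl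

lemma coloredWord_permute (x : ColoredInj p n t) (π : Equiv.Perm (Fin t)) :
    coloredWord (x.permute π) = coloredWord x ∘ π := rfl

variable [NeZero p]

lemma card_filter_wordDescents_coloredWord (P : Finset ℕ → Prop) [DecidablePred P] :
    #{x : ColoredInj p n t | P (wordDescents (coloredWord x))} =
      #{x : ColoredInj p n t | StrictMono (coloredWord x)} *
        #{π : Equiv.Perm (Fin t) | P (wordDescents π)} := by
  rw [← card_product]
  symm
  apply card_nbij' (fun y => y.1.permute y.2)
    (fun x => (x.permute (Tuple.sort (coloredWord x)), (Tuple.sort (coloredWord x))⁻¹))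
  · rintro ⟨y, π⟩ h
    simp only [coe_product, coe_filter, Set.mem_prod, Set.mem_ofPred_eq, mem_univ,
      true_and] at h ⊢
    rw [coloredWord_permute, wordDescents_comp_of_strictMono h.1]
    exact h.2
  · intro x h
    have hsorted := Tuple.strictMono_comp_sort (coloredWord_injective x)
    simp only [coe_product, coe_filter, Set.mem_prod, Set.mem_ofPred_eq, mem_univ,
      true_and] at h ⊢
    refine ⟨hsorted, ?_⟩
    rwa [← wordDescents_comp_of_strictMono hsorted, Function.comp_assoc,
      ← Equiv.Perm.coe_mul, mul_inv_cancel, Equiv.Perm.coe_one, Function.comp_id]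
  · rintro ⟨y, π⟩ h
    simp only [coe_product, coe_filter, Set.mem_prod, Set.mem_ofPred_eq, mem_univ,
      true_and] at h
    simp [coloredWord_permute, Tuple.sort_comp_perm_of_strictMono h.1,
      ColoredInj.permute_permute, ColoredInj.permute_one]
  · intro x _
    simp [ColoredInj.permute_permute, ColoredInj.permute_one]

lemma card_strictMono_coloredWord :
    #{x : ColoredInj p n t | StrictMono (coloredWord x)} = n.choose t * p ^ t := by
  have h := card_filter_wordDescents_coloredWord (p := p) (n := n) (t := t) fun _ => True
  simp only [filter_true, card_univ, Fintype.card_prod, Fintype.card_embedding_eq,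
    Fintype.card_fin, Fintype.card_fun, ZMod.card, Fintype.card_perm,
    Nat.descFactorial_eq_factorial_mul_choose] at h
  exact Nat.eq_of_mul_eq_mul_right (Nat.factorial_pos t) (by rw [← h]; ring)

theorem card_noDDescentAfter (ht : t ≤ n) (T : Finset ℕ) :
    #{σ : ColoredPerm p n |
        (∀ q ∈ cpDDescentSet σ, q ≤ t) ∧ (cpDDescentSet σ).filter (· < t) = T} =
      n.choose t * p ^ t * #{π : Equiv.Perm (Fin t) | wordDescents π = T} := by
  rw [← card_strictMono_coloredWord, ← card_filter_wordDescents_coloredWord (· = T)]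
  apply card_nbij' (restrictPrefix ht) ColoredInj.extend
  · intro σ hσ
    simp only [coe_filter, Set.mem_ofPred_eq, mem_univ, true_and] at hσ ⊢
    rw [wordDescents_coloredWord_restrictPrefix, hσ.2]
  · intro x hx
    simp only [coe_filter, Set.mem_ofPred_eq, mem_univ, true_and] at hx ⊢
    rw [← wordDescents_coloredWord_restrictPrefix ht, restrictPrefix_extend]
    exact ⟨cpDDescentSet_extend_le x, hx⟩
  · intro σ hσ
    simp only [coe_filter, Set.mem_ofPred_eq, mem_univ, true_and] at hσ
    exact extend_restrictPrefix ht hσ.1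
  · intro x _
    exact restrictPrefix_extend ht x

end Sorting

lemma eq_insert_or_eq_iff_forall_le_and_filter_lt {D T : Finset ℕ} {t : ℕ}
    (hT : ∀ q ∈ T, q < t) :
    (D = insert t T ∨ D = T) ↔ (∀ q ∈ D, q ≤ t) ∧ D.filter (· < t) = T := by
  constructor
  · rintro (rfl | rfl) <;> refine ⟨fun q hq => ?_, ?_⟩ <;> (try ext) <;> grind
  · rintro ⟨hle, rfl⟩
    by_cases ht : t ∈ D <;> [left; right] <;> ext q <;> grind

def dDescentCount (p n : ℕ) [NeZero p] (T : Finset ℕ) : ℕ :=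
  #{σ : ColoredPerm p n | cpDDescentSet σ = T}

lemma lt_of_mem_cpDDescentSet_one {t q : ℕ} {σ : ColoredPerm 1 t} (hq : q ∈ cpDDescentSet σ) :
    q < t := by
  obtain ⟨i, hd, rfl⟩ := mem_cpDDescentSet.1 hq
  by_contra hi
  rw [cpHasDDescentAt, dif_neg (by omega)] at hd
  exact hd (Subsingleton.elim _ _)

lemma dDescentCount_one (t : ℕ) (T : Finset ℕ) :
    dDescentCount 1 t T = #{π : Equiv.Perm (Fin t) | wordDescents π = T} := by
  have h := card_noDDescentAfter (p := 1) (le_refl t) T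
  simp only [Nat.choose_self, one_pow, one_mul] at h
  rw [← h, dDescentCount]
  congr 1
  refine filter_congr fun σ _ => ?_
  rw [filter_true_of_mem fun q hq => lt_of_mem_cpDDescentSet_one hq]
  exact ⟨fun h => ⟨fun q hq => (lt_of_mem_cpDDescentSet_one hq).le, h⟩, And.right⟩

theorem dDescentCount_insert_add {p n t : ℕ} [NeZero p] (ht : t ≤ n) {T : Finset ℕ}
    (hT : ∀ q ∈ T, q < t) :
    dDescentCount p n (insert t T) + dDescentCount p n T =
      n.choose t * p ^ t * dDescentCount 1 t T := by
  have hdisj : Disjoint (univ.filter fun σ : ColoredPerm p n => cpDDescentSet σ = insert t T)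
      (univ.filter fun σ : ColoredPerm p n => cpDDescentSet σ = T) := by
    rw [disjoint_left]
    intro σ h h'
    rw [mem_filter] at h h'
    exact lt_irrefl t (hT t (h'.2 ▸ h.2 ▸ mem_insert_self t T))
  rw [dDescentCount, dDescentCount, ← card_union_of_disjoint hdisj, ← filter_or,
    dDescentCount_one, ← card_noDDescentAfter ht]
  exact congrArg card (filter_congr fun σ _ => eq_insert_or_eq_iff_forall_le_and_filter_lt hT)

lemma dDescentCount_empty (p n : ℕ) [NeZero p] : dDescentCount p n ∅ = 1 := by
  have h := dDescentCount_insert_add (p := p) (Nat.zero_le n) (T := ∅) (by simp)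
  have h0 : dDescentCount p n {0} = 0 := card_eq_zero.2 <| filter_false_of_mem fun σ _ hσ => by
    obtain ⟨i, -, hi⟩ := mem_cpDDescentSet.1 (hσ ▸ mem_singleton_self 0)
    omega
  have h1 : dDescentCount 1 0 ∅ = 1 := by
    simp [dDescentCount, cpDDescentSet]
  simpa [h0, h1] using h

lemma invFact_natCast (d : ℕ) : invFact d = ((d ! : ℕ) : ℝ)⁻¹ := by
  simp [invFact]

lemma invFact_zero : invFact 0 = 1 := by
  simp [invFact]

lemma invFact_of_neg {m : ℤ} (h : m < 0) : invFact m = 0 := by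
  simp [invFact, not_le.mpr h]

def dDescentMatrix (p n k : ℕ) (s : ℕ → ℕ) : Matrix (Fin (k + 1)) (Fin (k + 1)) ℝ :=
  Matrix.of fun i j : Fin (k + 1) =>
    if (j : ℕ) = k then ((p : ℝ)⁻¹) ^ (n - s (i : ℕ)) * invFact ((n : ℤ) - s (i : ℕ))
    else invFact ((s ((j : ℕ) + 1) : ℤ) - s (i : ℕ))

section Determinant

variable {p n k : ℕ} {s : ℕ → ℕ}

lemma dDescentMatrix_submatrix_last_last :
    (dDescentMatrix p n (k + 1) s).submatrix (Fin.last (k + 1)).succAbove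
      (Fin.last (k + 1)).succAbove = dDescentMatrix 1 (s (k + 1)) k s := by
  ext i j
  simp only [Fin.succAbove_last, Matrix.submatrix_apply, dDescentMatrix, Matrix.of_apply,
    Fin.val_castSucc]
  have := j.isLt
  split_ifs <;> first | omega | simp_all

lemma dDescentMatrix_submatrix_last_castSucc_last :
    (dDescentMatrix p n (k + 1) s).submatrix (Fin.last (k + 1)).succAbove
      (Fin.last k).castSucc.succAbove = dDescentMatrix p n k s := by
  ext i j
  simp only [Fin.succAbove_last, Matrix.submatrix_apply, dDescentMatrix, Matrix.of_apply,
    Fin.val_castSucc]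
  rcases (Fin.le_last j).eq_or_lt with rfl | hj
  · simp
  · rw [Fin.succAbove_of_castSucc_lt _ _ (by simpa [Fin.lt_def] using hj)]
    simp [Fin.lt_def] at hj
    simp [hj.ne, show (j : ℕ) ≠ k + 1 by omega]

/-- Laplace expansion along the last row, whose only nonzero entries are the last two. -/
lemma det_dDescentMatrix_succ (hs : StrictMonoOn s (Set.Iic (k + 1))) :
    (dDescentMatrix p n (k + 1) s).det =
      ((p : ℝ)⁻¹) ^ (n - s (k + 1)) * invFact ((n : ℤ) - s (k + 1)) *
        (dDescentMatrix 1 (s (k + 1)) k s).det - (dDescentMatrix p n k s).det := by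
  have hzero (j : Fin k) :
      dDescentMatrix p n (k + 1) s (Fin.last (k + 1)) j.castSucc.castSucc = 0 := by
    have : s (j + 1) < s (k + 1) :=
      hs (Set.mem_Iic.2 (by omega)) (Set.mem_Iic.2 le_rfl) (by omega)
    simp only [dDescentMatrix, Matrix.of_apply, Fin.val_last, Fin.val_castSucc]
    rw [if_neg (by omega), invFact_of_neg (by omega)]
  rw [Matrix.det_succ_row _ (Fin.last (k + 1)), Fin.sum_univ_castSucc, Fin.sum_univ_castSucc,
    Finset.sum_eq_zero fun j _ => by rw [hzero, mul_zero, zero_mul],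
    dDescentMatrix_submatrix_last_last, dDescentMatrix_submatrix_last_castSucc_last]
  have hsub : dDescentMatrix p n (k + 1) s (Fin.last (k + 1)) (Fin.last k).castSucc = 1 := by
    simp [dDescentMatrix, invFact_zero]
  have hlast : dDescentMatrix p n (k + 1) s (Fin.last (k + 1)) (Fin.last (k + 1)) =
      ((p : ℝ)⁻¹) ^ (n - s (k + 1)) * invFact ((n : ℤ) - s (k + 1)) := by
    simp [dDescentMatrix]
  rw [hsub, hlast, Fin.val_last, Fin.val_castSucc, Fin.val_last,
    show k + 1 + k = 2 * k + 1 by ring, show k + 1 + (k + 1) = 2 * (k + 1) by ring,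
    pow_succ, pow_mul, pow_mul]
  norm_num
  ring

end Determinant

lemma choose_mul_pow_mul_factorial_eq {p n t : ℕ} (hp : p ≠ 0) (ht : t ≤ n) :
    (n.choose t : ℝ) * p ^ t * t ! =
      ((p : ℝ)⁻¹) ^ (n - t) * invFact ((n : ℤ) - t) * (p ^ n * n !) := by
  rw [← Nat.cast_sub ht, invFact_natCast, ← Nat.choose_mul_factorial_mul_factorial ht,
    ← Nat.sub_add_cancel ht, pow_add, Nat.add_sub_cancel, inv_pow]
  have : (p : ℝ) ≠ 0 := Nat.cast_ne_zero.2 hp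
  push_cast
  field_simp

theorem dDescentCount_image_eq_det {p n k : ℕ} [NeZero p] {s : ℕ → ℕ} (hs0 : s 0 = 0)
    (hs : StrictMonoOn s (Set.Iic k)) (hsn : s k < n) :
    (dDescentCount p n ((Icc 1 k).image s) : ℝ) =
      (dDescentMatrix p n k s).det * (p ^ n * n !) := by
  induction k generalizing p n with
  | zero =>
    rw [Icc_eq_empty (by omega), image_empty, dDescentCount_empty, Matrix.det_fin_one]
    simp only [dDescentMatrix, Matrix.of_apply, Fin.val_zero, if_true, hs0, Nat.sub_zero,
      Nat.cast_zero, sub_zero, invFact_natCast, inv_pow]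
    have : (p : ℝ) ≠ 0 := Nat.cast_ne_zero.2 (NeZero.ne p)
    field_simp
    norm_num
  | succ k ih =>
    have hk : s k < s (k + 1) :=
      hs (Set.mem_Iic.2 k.le_succ) (Set.mem_Iic.2 le_rfl) k.lt_succ_self
    have hs' : StrictMonoOn s (Set.Iic k) := hs.mono (Set.Iic_subset_Iic.2 k.le_succ)
    have hT : ∀ q ∈ (Icc 1 k).image s, q < s (k + 1) := by
      simp only [mem_image, mem_Icc]
      rintro q ⟨j, hj, rfl⟩
      exact hs (Set.mem_Iic.2 (by omega)) (Set.mem_Iic.2 le_rfl) (by omega)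
    have hrec : (dDescentCount p n (insert (s (k + 1)) ((Icc 1 k).image s)) : ℝ) +
        dDescentCount p n ((Icc 1 k).image s) =
          n.choose (s (k + 1)) * p ^ s (k + 1) *
            dDescentCount 1 (s (k + 1)) ((Icc 1 k).image s) := by
      exact_mod_cast dDescentCount_insert_add hsn.le hT
    rw [ih hs' (hk.trans hsn), ih (p := 1) hs' hk] at hrec
    rw [← insert_Icc_right_eq_Icc_add_one (by omega), image_insert, det_dDescentMatrix_succ hs]
    linear_combination hrec + (dDescentMatrix 1 (s (k + 1)) k s).det *
      choose_mul_pow_mul_factorial_eq (NeZero.ne p) hsn.le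

theorem statement4_general (p n k : ℕ) [NeZero p]
    (s : ℕ → ℕ) (hs0 : s 0 = 0) (hmono : ∀ i, i ≤ k → s i < s (i + 1))
    (hlast : s (k + 1) = n) :
    ((Finset.univ.filter fun σ : ColoredPerm p n =>
        cpDDescentSet σ = (Finset.Icc 1 k).image s).card : ℝ)
        / (Fintype.card (ColoredPerm p n) : ℝ)
      = (Matrix.of fun i j : Fin (k + 1) =>
          if (j : ℕ) = k then ((p : ℝ)⁻¹) ^ (n - s (i : ℕ)) * invFact ((n : ℤ) - s (i : ℕ))
          else invFact ((s ((j : ℕ) + 1) : ℤ) - s (i : ℕ))).det := by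
  have hs : StrictMonoOn s (Set.Iic k) :=
    strictMonoOn_Iic_of_lt_succ fun m hm => by simpa using hmono m hm.le
  have hcount := dDescentCount_image_eq_det (p := p) hs0 hs (hlast ▸ hmono k le_rfl)
  have hcard : (Fintype.card (ColoredPerm p n) : ℝ) = p ^ n * n ! := by
    simp [Fintype.card_perm, mul_comm]
  have hne : (p : ℝ) ^ n * n ! ≠ 0 := by
    have := NeZero.ne p
    positivity
  change (dDescentCount p n _ : ℝ) / _ = (dDescentMatrix p n k s).det
  rw [hcount, hcard, mul_div_cancel_right₀ _ hne]

/-- **Corollary (uniform distribution on `G_{p,n}`, d-descents, case `s_k < n`).**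
For `0 = s_0 < s_1 < ⋯ < s_k < n`, `s_{k+1} := n`, the probability that the d-descent set
of a uniformly random `σ ∈ G_{p,n}` equals `{s_1,…,s_k}` is `det(g(i,j))_{i,j=0,…,k}`, with
`g(i,j) = 1/(s_{j+1}-s_i)!` for `j < k` and `g(i,k) = (1/p)^{n-s_i}/(n-s_i)!`. -/
theorem statement4 (p n k : ℕ) [NeZero p] (hn : 1 ≤ n)
    (s : ℕ → ℕ) (hs0 : s 0 = 0) (hmono : ∀ i, i ≤ k → s i < s (i + 1))
    (hlast : s (k + 1) = n) :
    ((Finset.univ.filter fun σ : ColoredPerm p n =>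
        cpDDescentSet σ = (Finset.Icc 1 k).image s).card : ℝ)
        / (Fintype.card (ColoredPerm p n) : ℝ)
      = (Matrix.of fun i j : Fin (k + 1) =>
          if (j : ℕ) = k then ((p : ℝ)⁻¹) ^ (n - s (i : ℕ)) * invFact ((n : ℤ) - s (i : ℕ))
          else invFact ((s ((j : ℕ) + 1) : ℤ) - s (i : ℕ))).det :=
  statement4_general p n k s hs0 hmono hlast
end
end

section
/- Let p ≥ 1, c ≥ 1 be integers and b = pc + 1, and define f : {0,…,b−1} → {0,…,b−1} by f(x) := px mod b. Then (i) f is a bijection of {0,…,b−1}; (ii) for all x, y ∈ {0,…,b−1}, x < y if and only if f(x) ≺ f(y); and (iii) for x ∈ {0,…,b−1}, x > c if and only if f(x) ≢ 0 (mod p). -/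
/-!
Since `p * c ≡ -1 (mod b)`, multiplication by `p` is inverted by multiplication by `-c`.
Writing `y = j * p + r`, this inverse sends `y` to `j` when `r = 0` and to
`c * (p - r) + j + 1` when `r ≠ 0`. These values are exactly the positions of `y` in the
tilde order: the residue class `r = 0` fills the positions `0, …, c`, and the class with
`p - r = k ≥ 1` fills `c * k + 1, …, c * k + c`. So `f` is the bijection that lists the
elements of `{0, …, b - 1}` in tilde order, and `f x ≢ 0 (mod p)` exactly when `x > c`.
-/

noncomputable section

/-- Rank of a residue `r ∈ {0,…,p-1}` in the order `0, p-1, p-2, …, 1`. -/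
def rhoNat (p r : ℕ) : ℕ := if r = 0 then 0 else p - r

/-- The tilde order `≺` on `{0,…,b-1}` (for `b = pc+1`): writing `x = jp + r`,
`x ≺ y` iff the residue of `x` comes strictly earlier in the order `0, p-1, …, 1`,
or the residues agree and `⌊x/p⌋ < ⌊y/p⌋`. -/
def tildeLt (p x y : ℕ) : Prop :=
  rhoNat p (x % p) < rhoNat p (y % p) ∨ (rhoNat p (x % p) = rhoNat p (y % p) ∧ x / p < y / p)

def tildeRank (p c y : ℕ) : ℕ :=
  if y % p = 0 then y / p else c * (p - y % p) + y / p + 1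

section TildeRank

variable {p c y z : ℕ}

lemma div_le_of_lt_mul_add_one (hy : y < p * c + 1) : y / p ≤ c :=
  Nat.div_le_of_le_mul (Nat.lt_succ_iff.mp hy)

lemma div_lt_of_mod_ne_zero (hy : y < p * c + 1) (hr : y % p ≠ 0) : y / p < c := by
  have hdiv := Nat.div_add_mod y p
  exact Nat.lt_of_mul_lt_mul_left (a := p) (by omega)

lemma mul_add_lt_mul_add_iff_lex {a a' j j' : ℕ} (hj : j < c) (hj' : j' < c) :
    c * a + j < c * a' + j' ↔ a < a' ∨ a = a' ∧ j < j' := by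
  have hstep {m n : ℕ} (h : m < n) : c * m + c ≤ c * n := by
    simpa [Nat.mul_succ] using Nat.mul_le_mul_left c h
  constructor
  · intro h
    rcases lt_trichotomy a a' with ha | rfl | ha
    · exact .inl ha
    · exact .inr ⟨rfl, by omega⟩
    · have := hstep ha
      omega
  · rintro (ha | ⟨rfl, hjj⟩)
    · have := hstep ha
      omega
    · omega

lemma mul_tildeRank_mod (hp : 0 < p) (hy : y < p * c + 1) :
    p * tildeRank p c y % (p * c + 1) = y := by
  unfold tildeRank
  have hdiv := Nat.div_add_mod y p
  have hrp := Nat.mod_lt y hp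
  generalize y % p = r at hdiv hrp ⊢
  generalize y / p = j at hdiv ⊢
  split_ifs with hr
  · rw [← hdiv, hr, add_zero] at hy ⊢
    exact Nat.mod_eq_of_lt hy
  · obtain ⟨s, rfl⟩ : ∃ s, p = s + r := ⟨p - r, by omega⟩
    have hprod : (s + r) * (c * (s + r - r) + j + 1) = s * ((s + r) * c + 1) + y := by
      rw [Nat.add_sub_cancel, ← hdiv]
      ring
    rw [hprod, Nat.mul_add_mod_of_lt hy]

lemma tildeRank_lt (hp : 0 < p) (hy : y < p * c + 1) : tildeRank p c y < p * c + 1 := by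
  unfold tildeRank
  split_ifs with hr
  · have := div_le_of_lt_mul_add_one hy
    have := Nat.le_mul_of_pos_left c hp
    omega
  · have hj := div_lt_of_mod_ne_zero hy hr
    have hrp := Nat.mod_lt y hp
    have := Nat.mul_le_mul_left c (show p - y % p + 1 ≤ p by omega)
    rw [Nat.mul_succ, Nat.mul_comm c p] at this
    omega

lemma le_mul_sub_mod (hp : 0 < p) : c ≤ c * (p - y % p) :=
  Nat.le_mul_of_pos_right c (Nat.sub_pos_of_lt (Nat.mod_lt y hp))

lemma c_lt_tildeRank_iff (hp : 0 < p) (hy : y < p * c + 1) : c < tildeRank p c y ↔ y % p ≠ 0 := by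
  unfold tildeRank
  split_ifs with hr
  · simpa [hr] using div_le_of_lt_mul_add_one hy
  · simp only [ne_eq, hr, not_false_eq_true, iff_true]
    exact Nat.lt_succ_of_le ((le_mul_sub_mod hp).trans (Nat.le_add_right _ _))

lemma tildeLt_iff_tildeRank_lt (hp : 0 < p) (hy : y < p * c + 1) (hz : z < p * c + 1) :
    tildeLt p y z ↔ tildeRank p c y < tildeRank p c z := by
  unfold tildeLt rhoNat tildeRank
  have hyp := Nat.mod_lt y hp
  have hzp := Nat.mod_lt z hp
  split_ifs with hry hrz hrz
  · simp
  · have := le_mul_sub_mod (c := c) (y := z) hp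
    have := div_le_of_lt_mul_add_one hy
    lia
  · have := le_mul_sub_mod (c := c) (y := y) hp
    have := div_le_of_lt_mul_add_one hz
    lia
  · rw [Nat.add_lt_add_iff_right, mul_add_lt_mul_add_iff_lex (div_lt_of_mod_ne_zero hy hry)
      (div_lt_of_mod_ne_zero hz hrz)]

end TildeRank

theorem statement9_general (p c : ℕ) (hp : 1 ≤ p)
    (b : ℕ) (hb : b = p * c + 1)
    (f : Fin b → Fin b) (hf : ∀ x : Fin b, (f x : ℕ) = p * (x : ℕ) % b) :
    Function.Bijective f
      ∧ (∀ x y : Fin b, x < y ↔ tildeLt p (f x : ℕ) (f y : ℕ))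
      ∧ (∀ x : Fin b, c < (x : ℕ) ↔ ¬((f x : ℕ) % p = 0)) := by
  subst hb
  let g : Fin (p * c + 1) → Fin (p * c + 1) := fun y => ⟨tildeRank p c y, tildeRank_lt hp y.2⟩
  have hfg : Function.RightInverse g f := fun y => Fin.ext ((hf _).trans (mul_tildeRank_mod hp y.2))
  have hbij : Function.Bijective f := Finite.surjective_iff_bijective.mp hfg.surjective
  have hgf (x : Fin (p * c + 1)) : tildeRank p c (f x) = x :=
    congrArg Fin.val (hfg.leftInverse_of_injective hbij.1 x)
  refine ⟨hbij, fun x y => ?_, fun x => ?_⟩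
  · rw [tildeLt_iff_tildeRank_lt hp (f x).2 (f y).2, hgf, hgf, Fin.lt_def]
  · rw [← hgf x]
    exact c_lt_tildeRank_iff hp (f x).2

/-- **Lemma.** For `b = pc + 1`, the map `f(x) = px mod b` is a bijection of `{0,…,b-1}`;
it is order preserving from the usual order `<` to the tilde order `≺`; and `x > c` iff
`f(x) ≢ 0 (mod p)`. -/
theorem statement9 (p c : ℕ) (hp : 1 ≤ p) (hc : 1 ≤ c)
    (b : ℕ) (hb : b = p * c + 1)
    (f : Fin b → Fin b) (hf : ∀ x : Fin b, (f x : ℕ) = p * (x : ℕ) % b) :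
    Function.Bijective f
      ∧ (∀ x y : Fin b, x < y ↔ tildeLt p (f x : ℕ) (f y : ℕ))
      ∧ (∀ x : Fin b, c < (x : ℕ) ↔ ¬((f x : ℕ) % p = 0)) :=
  statement9_general p c hp b hb f hf
end
end

section
/- Let p ≥ 1, c ≥ 1 be integers with b = pc − 1 ≥ 1, and let P_c^− be the transition matrix of the (−b,n,p)-carries process on {0,…,ℓ}. Then for every integer N ≥ 0 and all i,j ∈ {0,…,ℓ}, ((P_c^−)^N)_{ij} = Σ_{k=0}^{ℓ} (−b)^{−kN} u_{ik} v_{kj}. In particular P_c^− is diagonalizable with eigenvalues (−b)^{−k}, k = 0,…,ℓ, the right eigenvector for (−b)^{−k} being the k-th column of U and the left eigenvector the k-th row of V. -/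
/-!
Put `q(X) = ⌊(i + X₁ + ⋯ + Xₙ + c - 1) / b⌋`, so that the chain moves from `i` to `n - q(X)`.
The digit-sum identity `∑_{X ∈ [0,b)ⁿ} binom(m + ⌊(A + ∑ X) / b⌋, n) = binom(bm + A, n)` shows
that the polynomials `∑_X binom((x - 1)/p + q(X), n)` and `(-1)ⁿ binom((-bx - 1)/p + n - i, n)`,
both of degree `≤ n`, agree at the `n + 1` points `x = pm + 1`. Comparing coefficients of
`x^(n-k)` gives `P U = U D` with `D = diag((-b)^(-k))`. On the other side
`∑_k u_{ik} A_{n-k}(x) = ∑_a binom(a + n - i, n) xᵃ = xⁱ / (1 - x)^(n+1)`, which is `U V = 1`.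
Hence `P = U D U⁻¹`. When `p = 1` the constant coefficient of `binom(x - 1 + n - i, n)` vanishes
for `i < n`, which is why the state `n` can be dropped.
-/

open scoped Classical

noncomputable section

/-- `u_{ij} := [x^{n-j}] binom(n + (x-1)/p - i, n)`, the coefficient of `x^{n-j}` in the
degree-`n` polynomial `(1/n!) ∏_{m=0}^{n-1} (n + (x-1)/p - i - m)`. -/
def uEnt (p n : ℕ) (i j : ℕ) : ℝ :=
  (Polynomial.C ((n.factorial : ℝ))⁻¹ *
    ∏ m ∈ Finset.range n,
      ((Polynomial.X - 1) * Polynomial.C ((p : ℝ))⁻¹ +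
        Polynomial.C ((n : ℝ) - (i : ℝ) - (m : ℝ)))).coeff (n - j)

/-- `v_{ij} := [x^j]((1-x)^{n+1} A_{n-i}(x))`, where `A_m(x) = Σ_{k≥0} (pk+1)^m x^k`. -/
def vEnt (p n : ℕ) (i j : ℕ) : ℝ :=
  PowerSeries.coeff j
    ((1 - PowerSeries.X) ^ (n + 1) * PowerSeries.mk fun a => ((p * a + 1 : ℕ) : ℝ) ^ (n - i))

open Finset Polynomial

namespace Matrix

variable {m R : Type*} [Fintype m] [DecidableEq m] [CommRing R] {P U V : Matrix m m R}
  {d : m → R}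

theorem pow_eq_mul_diagonal_pow_mul (hUV : U * V = 1) (hPU : P * U = U * diagonal d) (N : ℕ) :
    P ^ N = U * diagonal (d ^ N) * V := by
  let u : (Matrix m m R)ˣ := ⟨U, V, hUV, mul_eq_one_comm.mp hUV⟩
  have hP : P = U * diagonal d * V := by
    calc P = P * (U * V) := by rw [hUV, Matrix.mul_one]
      _ = U * diagonal d * V := by rw [← Matrix.mul_assoc, hPU]
  rw [hP, ← diagonal_pow]
  exact Units.conj_pow u (diagonal d) N

theorem mulVec_col_eq_smul (hPU : P * U = U * diagonal d) (k : m) :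
    P *ᵥ (fun i => U i k) = d k • fun i => U i k := by
  funext i
  change (P * U) i k = d k * U i k
  rw [hPU, mul_diagonal, mul_comm]

theorem vecMul_row_eq_smul (hUV : U * V = 1) (hPU : P * U = U * diagonal d) (k : m) :
    V k ᵥ* P = d k • V k := by
  have hVP : V * P = diagonal d * V := by
    calc V * P = V * P * (U * V) := by rw [hUV, Matrix.mul_one]
      _ = V * (P * U) * V := by simp only [Matrix.mul_assoc]
      _ = diagonal d * V := by
          rw [hPU, ← Matrix.mul_assoc, mul_eq_one_comm.mp hUV, Matrix.one_mul]
  funext j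
  change (V * P) k j = d k * V k j
  rw [hVP, diagonal_mul]

end Matrix

namespace Polynomial

lemma coeff_comp_C_mul_X {R : Type*} [CommSemiring R] (f : R[X]) (a : R) (d : ℕ) :
    (f.comp (C a * X)).coeff d = a ^ d * f.coeff d := by
  induction f using Polynomial.induction_on' with
  | add f g hf hg => simp [add_comp, hf, hg, mul_add]
  | monomial m r =>
    rw [← C_mul_X_pow_eq_monomial, mul_comp, C_comp, pow_comp, X_comp, mul_pow, ← C_pow,
      ← mul_assoc, ← C_mul, coeff_C_mul_X_pow, coeff_C_mul_X_pow]
    split_ifs with h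
    · rw [h, mul_comm]
    · rw [mul_zero]

lemma eval_eq_sum_fin_coeff_sub {R : Type*} [Semiring R] {f : R[X]} {n ℓ : ℕ}
    (hf : f.natDegree ≤ n) (hℓn : ℓ ≤ n) (hlow : ∀ j < n - ℓ, f.coeff j = 0) (y : R) :
    f.eval y = ∑ k : Fin (ℓ + 1), f.coeff (n - k) * y ^ (n - k) := by
  rw [eval_eq_sum_range' (Nat.lt_succ_of_le hf), ← sum_range_reflect,
    Fin.sum_univ_eq_sum_range (fun k => f.coeff (n - k) * y ^ (n - k))]
  refine (sum_subset (range_subset_range.2 (by omega)) fun k hk hk' => ?_).symm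
  simp only [mem_range] at hk hk'
  rw [hlow _ (by omega), zero_mul]

end Polynomial

lemma Finset.sum_card_filter_eq_sub_mul {α R : Type*} [Fintype α] [NonAssocSemiring R]
    {n ℓ : ℕ} (hℓn : ℓ ≤ n) (q : α → ℕ) (hq : ∀ x, n - ℓ ≤ q x ∧ q x ≤ n) (f : ℕ → R) :
    ∑ j : Fin (ℓ + 1), (#{x | q x = n - j} : R) * f j = ∑ x, f (n - q x) := by
  simp only [natCast_card_filter, sum_mul, ite_mul, one_mul, zero_mul]
  rw [sum_comm]
  refine sum_congr rfl fun x _ => ?_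
  obtain ⟨hlo, hhi⟩ := hq x
  rw [Fin.sum_univ_eq_sum_range (fun j => if q x = n - j then f j else 0),
    sum_congr rfl (g := fun j => if n - q x = j then f j else 0) fun j hj => ?_,
    sum_ite_eq, if_pos (mem_range.2 (by omega))]
  simp only [mem_range] at hj
  exact if_congr (by omega) rfl rfl

lemma neg_one_pow_mul_neg_pow_sub_div_pow {x : ℝ} (hx : x ≠ 0) {k n : ℕ} (hk : k ≤ n) :
    (-1) ^ n * (-x) ^ (n - k) / x ^ n = ((-x) ^ k)⁻¹ := by
  rw [pow_sub₀ _ (neg_ne_zero.2 hx) hk, ← mul_assoc, ← mul_pow, neg_one_mul, neg_neg]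
  field_simp

namespace CarriesProcess

variable {p n b c ℓ i : ℕ}

section DigitSums

lemma sum_fin_succ_pi {M : Type*} [AddCommMonoid M] (n : ℕ) (g : ℕ → M) :
    ∑ X : Fin (n + 1) → Fin b, g (∑ s, (X s : ℕ)) =
      ∑ t : Fin b, ∑ X : Fin n → Fin b, g (t + ∑ s, (X s : ℕ)) := by
  rw [← (Fin.consEquiv fun _ => Fin b).sum_comp, Fintype.sum_prod_type]
  simp [Fin.consEquiv, Fin.sum_univ_succ]

/-- Among `s + 1, …, s + b` only `b * (s / b + 1)` is divisible by `b`. -/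
lemma sum_ite_dvd_add_one {M : Type*} [AddCommMonoid M] (hb : 0 < b) (s : ℕ) (g : ℕ → M) :
    ∑ t : Fin b, (if b ∣ s + t + 1 then g ((s + t) / b) else 0) = g (s / b) := by
  have hmod := Nat.mod_lt s hb
  have hs := Nat.div_add_mod s b
  let t₀ : Fin b := ⟨b - 1 - s % b, by omega⟩
  have ht₀ : s + t₀ = b * (s / b) + (b - 1) := by simp only [t₀]; omega
  have hdvd : b ∣ s + t₀ + 1 := ⟨s / b + 1, by rw [ht₀, Nat.mul_succ]; omega⟩
  rw [sum_eq_single t₀]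
  · rw [if_pos hdvd, ht₀, Nat.mul_add_div hb, Nat.div_eq_of_lt (Nat.sub_lt hb one_pos), add_zero]
  · refine fun t _ ht => if_neg fun h => ht ?_
    have : (t : ℕ) ≡ t₀ [MOD b] :=
      Nat.ModEq.add_left_cancel' s <| Nat.ModEq.add_right_cancel' 1 <|
        (Nat.modEq_zero_iff_dvd.2 h).trans (Nat.modEq_zero_iff_dvd.2 hdvd).symm
    exact Fin.ext (this.eq_of_lt_of_lt t.isLt t₀.isLt)
  · simp

lemma choose_succ_div_succ (e k : ℕ) :
    ((e + 1) / b).choose (k + 1) =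
      (e / b).choose (k + 1) + if b ∣ e + 1 then (e / b).choose k else 0 := by
  by_cases h : b ∣ e + 1
  · rw [Nat.succ_div_of_dvd h, if_pos h, Nat.choose_succ_succ', add_comm]
  · rw [Nat.succ_div_of_not_dvd h, if_neg h, add_zero]

theorem sum_choose_add_sum_div (hb : 0 < b) (n A : ℕ) :
    ∑ X : Fin n → Fin b, ((A + ∑ s, (X s : ℕ)) / b).choose n = A.choose n := by
  induction n generalizing A with
  | zero => simp
  | succ n ihn =>
    induction A with
    | zero =>
      refine sum_eq_zero fun X _ => Nat.choose_eq_zero_of_lt ?_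
      have hX : ∑ s, (X s : ℕ) < ∑ _s : Fin (n + 1), b :=
        sum_lt_sum_of_nonempty univ_nonempty fun s _ => (X s).isLt
      rw [zero_add, Nat.div_lt_iff_lt_mul hb]
      simpa [mul_comm] using hX
    | succ A ihA =>
      have hcarry : ∑ X : Fin (n + 1) → Fin b,
          (if b ∣ A + (∑ s, (X s : ℕ)) + 1 then ((A + ∑ s, (X s : ℕ)) / b).choose n else 0) =
            A.choose n := by
        rw [sum_fin_succ_pi n (fun S => if b ∣ A + S + 1 then ((A + S) / b).choose n else 0),
          sum_comm, ← ihn A]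
        refine sum_congr rfl fun X _ => ?_
        rw [← sum_ite_dvd_add_one hb _ fun q => q.choose n]
        refine sum_congr rfl fun t _ => ?_
        rw [show A + (t + ∑ s, (X s : ℕ)) = A + (∑ s, (X s : ℕ)) + t by ring]
      calc ∑ X : Fin (n + 1) → Fin b, ((A + 1 + ∑ s, (X s : ℕ)) / b).choose (n + 1)
          = ∑ X : Fin (n + 1) → Fin b, (((A + ∑ s, (X s : ℕ)) / b).choose (n + 1) +
              if b ∣ A + (∑ s, (X s : ℕ)) + 1 then ((A + ∑ s, (X s : ℕ)) / b).choose n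
              else 0) := by
            refine sum_congr rfl fun X _ => ?_
            rw [add_right_comm, choose_succ_div_succ]
        _ = (A + 1).choose (n + 1) := by
            rw [sum_add_distrib, ihA, hcarry, Nat.choose_succ_succ', add_comm]

theorem sum_choose_add_div (hb : 0 < b) (n m A : ℕ) :
    ∑ X : Fin n → Fin b, (m + (A + ∑ s, (X s : ℕ)) / b).choose n = (b * m + A).choose n := by
  rw [← sum_choose_add_sum_div hb n (b * m + A)]
  refine sum_congr rfl fun X _ => ?_
  rw [add_assoc, Nat.mul_add_div hb]

end DigitSums

section BinomialPolynomial

/-- The polynomial `x ↦ binom((x - 1) / p + t, n)`; `uEnt p n i` lists its coefficients at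
`t = n - i`. -/
def binomPoly (p n : ℕ) (t : ℝ) : ℝ[X] :=
  C (n.factorial : ℝ)⁻¹ * ∏ m ∈ range n, ((X - 1) * C (p : ℝ)⁻¹ + C (t - m))

lemma uEnt_eq_coeff_binomPoly (p n i j : ℕ) :
    uEnt p n i j = (binomPoly p n (n - i)).coeff (n - j) := rfl

lemma natDegree_binomPoly_le (p n : ℕ) (t : ℝ) : (binomPoly p n t).natDegree ≤ n := by
  refine (natDegree_C_mul_le _ _).trans ((natDegree_prod_le _ _).trans ?_)
  refine (sum_le_sum fun m _ => (?_ : _ ≤ 1)).trans (by simp)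
  refine (natDegree_add_le _ _).trans (max_le ?_ (by rw [natDegree_C]; exact zero_le_one))
  refine natDegree_mul_le.trans ?_
  simp only [natDegree_C, add_zero]
  exact (natDegree_sub_le _ _).trans (by simp)

lemma eval_binomPoly (p n : ℕ) (t y : ℝ) :
    (binomPoly p n t).eval y = Ring.choose ((y - 1) / p + t) n := by
  rw [Ring.choose_eq_smul, ← aeval_eq_smeval, aeval_def, ← eval_map, descPochhammer_map,
    descPochhammer_eval_eq_prod_range, smul_eq_mul]
  simp [binomPoly, eval_prod, div_eq_mul_inv, add_sub_assoc]

lemma eval_binomPoly_natCast (hp : 0 < p) (q a : ℕ) :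
    (binomPoly p n q).eval ((p * a + 1 : ℕ) : ℝ) = (a + q).choose n := by
  rw [eval_binomPoly, ← Ring.choose_natCast]
  congr 1
  have : (p : ℝ) ≠ 0 := by positivity
  push_cast
  field_simp
  ring

lemma eval_binomPoly_neg (hp : 0 < p) (hc : 1 ≤ c) (hb : b + 1 = p * c) (i m : ℕ) :
    (binomPoly p n (n - i)).eval (-(b : ℝ) * ((p * m + 1 : ℕ) : ℝ)) =
      (-1) ^ n * (b * m + (i + (c - 1))).choose n := by
  have hp' : (p : ℝ) ≠ 0 := by positivity
  have hb' : (b : ℝ) + 1 = p * c := by exact_mod_cast hb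
  have harg : (-(b : ℝ) * ((p * m + 1 : ℕ) : ℝ) - 1) / p + ((n : ℝ) - i) =
      -(((b * m + (i + (c - 1)) : ℕ) : ℝ) + 1 - n) := by
    push_cast [Nat.cast_sub hc]
    field_simp
    linear_combination -hb'
  rw [eval_binomPoly, harg, Ring.choose_neg, sub_add_cancel, add_sub_cancel_right,
    Ring.choose_natCast, Units.smul_def, Int.negOnePow_def]
  simp

theorem sum_binomPoly_carry (hp : 0 < p) (hc : 1 ≤ c) (hb0 : 0 < b) (hb : b + 1 = p * c)
    (i : ℕ) :
    ∑ X : Fin n → Fin b, binomPoly p n ((i + (∑ s, (X s : ℕ)) + (c - 1)) / b : ℕ) =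
      C ((-1) ^ n) * (binomPoly p n (n - i)).comp (C (-(b : ℝ)) * X) := by
  refine eq_of_natDegree_lt_card_of_eval_eq _ _
    (f := fun m : Fin (n + 1) => ((p * m + 1 : ℕ) : ℝ)) (fun m m' h => Fin.ext ?_) (fun m => ?_) ?_
  · have := Nat.cast_injective h
    exact Nat.eq_of_mul_eq_mul_left hp (by omega)
  · simp only [eval_finsetSum, eval_binomPoly_natCast hp, eval_mul, eval_C, eval_comp, eval_X,
      eval_binomPoly_neg hp hc hb, ← mul_assoc, ← pow_add, Even.neg_one_pow ⟨n, rfl⟩, one_mul]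
    rw [← Nat.cast_sum, ← sum_choose_add_div hb0 n m (i + (c - 1))]
    congr 2 with X
    rw [add_right_comm]
  · rw [Fintype.card_fin, Nat.lt_succ_iff]
    refine max_le (natDegree_sum_le_of_forall_le _ _ fun X _ => natDegree_binomPoly_le _ _ _) ?_
    refine (natDegree_C_mul_le _ _).trans (natDegree_comp_le.trans ?_)
    refine (Nat.mul_le_mul (natDegree_binomPoly_le _ _ _)
      ((natDegree_C_mul_le _ _).trans natDegree_X_le)).trans ?_
    rw [mul_one]

end BinomialPolynomial

section Inverse

lemma coeff_binomPoly_eq_zero_of_lt (hℓ : ℓ = if p = 1 then n - 1 else n) (hi : i ≤ ℓ) :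
    ∀ j < n - ℓ, (binomPoly p n (n - i)).coeff j = 0 := by
  intro j hj
  split_ifs at hℓ with hp
  · subst hp hℓ
    obtain rfl : j = 0 := by omega
    have harg : ((0 : ℝ) - 1) / (1 : ℕ) + (n - i) = (n - 1 - i : ℕ) := by
      rw [Nat.cast_sub (by omega), Nat.cast_sub (by omega)]
      push_cast
      ring
    rw [coeff_zero_eq_eval_zero, eval_binomPoly, harg, Ring.choose_natCast,
      Nat.choose_eq_zero_of_lt (by omega), Nat.cast_zero]
  · omega

lemma sum_uEnt_smul_mk (hp : 0 < p) (hℓ : ℓ = if p = 1 then n - 1 else n) (hi : i ≤ ℓ) :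
    ∑ k : Fin (ℓ + 1), uEnt p n i k • PowerSeries.mk (fun a => ((p * a + 1 : ℕ) : ℝ) ^ (n - k)) =
      PowerSeries.X ^ i * PowerSeries.mk fun a => ((n + a).choose n : ℝ) := by
  have hℓn : ℓ ≤ n := by split_ifs at hℓ <;> omega
  ext a
  simp only [map_sum, map_smul, PowerSeries.coeff_mk, smul_eq_mul, uEnt_eq_coeff_binomPoly,
    PowerSeries.coeff_X_pow_mul']
  rw [← eval_eq_sum_fin_coeff_sub (natDegree_binomPoly_le _ _ _) hℓn
      (coeff_binomPoly_eq_zero_of_lt hℓ hi), ← Nat.cast_sub (hi.trans hℓn),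
    eval_binomPoly_natCast hp]
  split_ifs with hia
  · congr 2
    omega
  · rw [Nat.choose_eq_zero_of_lt (by omega), Nat.cast_zero]

theorem sum_uEnt_mul_vEnt (hp : 0 < p) (hℓ : ℓ = if p = 1 then n - 1 else n) (hi : i ≤ ℓ)
    (j : ℕ) : ∑ k : Fin (ℓ + 1), uEnt p n i k * vEnt p n k j = if i = j then 1 else 0 := by
  have hinv : (1 - PowerSeries.X : PowerSeries ℝ) ^ (n + 1) *
      PowerSeries.mk (fun a => ((n + a).choose n : ℝ)) = 1 := by
    rw [← PowerSeries.invOneSubPow_val_succ_eq_mk_add_choose,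
      ← PowerSeries.invOneSubPow_inv_eq_one_sub_pow]
    exact (PowerSeries.invOneSubPow ℝ (n + 1)).inv_val
  calc ∑ k : Fin (ℓ + 1), uEnt p n i k * vEnt p n k j
      = PowerSeries.coeff j ((1 - PowerSeries.X) ^ (n + 1) * ∑ k : Fin (ℓ + 1),
          uEnt p n i k • PowerSeries.mk (fun a => ((p * a + 1 : ℕ) : ℝ) ^ (n - k))) := by
        simp only [vEnt, mul_sum, mul_smul_comm, map_sum, map_smul, smul_eq_mul]
    _ = if i = j then 1 else 0 := by
        rw [sum_uEnt_smul_mk hp hℓ hi, mul_left_comm, hinv, mul_one, PowerSeries.coeff_X_pow]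
        exact if_congr eq_comm rfl rfl

end Inverse

section Transition

lemma carry_div_bounds (hn : 1 ≤ n) (hb0 : 0 < b) (hb : b + 1 = p * c)
    (hℓ : ℓ = if p = 1 then n - 1 else n) (hi : i ≤ ℓ) (X : Fin n → Fin b) :
    n - ℓ ≤ (i + (∑ s, (X s : ℕ)) + (c - 1)) / b ∧
      (i + (∑ s, (X s : ℕ)) + (c - 1)) / b ≤ n := by
  have hX : ∑ s, ((X s : ℕ) + 1) ≤ ∑ _s : Fin n, b := sum_le_sum fun s _ => (X s).isLt
  simp only [sum_add_distrib, sum_const, card_univ, Fintype.card_fin, smul_eq_mul,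
    mul_one] at hX
  refine ⟨?_, Nat.le_of_lt_succ ((Nat.div_lt_iff_lt_mul hb0).2 ?_)⟩ <;>
    split_ifs at hℓ with hp
  · subst hp hℓ
    rw [Nat.le_div_iff_mul_le hb0, show n - (n - 1) = 1 by omega, one_mul]
    omega
  · rw [hℓ, Nat.sub_self]
    exact Nat.zero_le _
  · subst hp
    rw [Nat.succ_mul]
    omega
  · have hp0 : p ≠ 0 := by rintro rfl; simp at hb
    have : 2 * c ≤ p * c := Nat.mul_le_mul_right c (by omega)
    rw [Nat.succ_mul]
    omega

theorem sum_card_mul_uEnt (hp : 0 < p) (hc : 1 ≤ c) (hn : 1 ≤ n) (hb0 : 0 < b)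
    (hb : b + 1 = p * c) (hℓ : ℓ = if p = 1 then n - 1 else n) (hi : i ≤ ℓ) (k : ℕ) :
    ∑ j : Fin (ℓ + 1),
        (#{X : Fin n → Fin b | (i + (∑ s, (X s : ℕ)) + (c - 1)) / b = n - j} : ℝ) *
          uEnt p n j k =
      (-1) ^ n * (-(b : ℝ)) ^ (n - k) * uEnt p n i k := by
  have hℓn : ℓ ≤ n := by split_ifs at hℓ <;> omega
  have hbounds := carry_div_bounds hn hb0 hb hℓ hi
  rw [sum_card_filter_eq_sub_mul hℓn _ hbounds fun j => uEnt p n j k]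
  have hterm : ∀ X : Fin n → Fin b, uEnt p n (n - (i + (∑ s, (X s : ℕ)) + (c - 1)) / b) k =
      (binomPoly p n ((i + (∑ s, (X s : ℕ)) + (c - 1)) / b : ℕ)).coeff (n - k) := by
    intro X
    rw [uEnt_eq_coeff_binomPoly, Nat.cast_sub (hbounds X).2, sub_sub_cancel]
  simp only [hterm, ← finsetSum_coeff, sum_binomPoly_carry hp hc hb0 hb, coeff_C_mul,
    coeff_comp_C_mul_X, uEnt_eq_coeff_binomPoly, mul_assoc]

end Transition

end CarriesProcess

open CarriesProcess

/-- **Theorem (spectral decomposition of the `(-b,n,p)`-carries process).**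
Let `b = pc - 1 ≥ 1`, `ℓ = n` for `p ≥ 2` and `ℓ = n-1` for `p = 1`, and let `P` be the
transition matrix of the `(-b,n,p)`-carries process: from state `i`, with `X_1,…,X_n` uniform
on `{0,…,b-1}`, the next state `j` satisfies `i + X_1 + ⋯ + X_n + (b+1)/p - 1 = (n-j)·b + r`,
`0 ≤ r < b`. Then `(P^N)_{ij} = Σ_{k=0}^{ℓ} (-b)^{-kN} u_{ik} v_{kj}` for all `N ≥ 0`;
in particular `P` is diagonalizable with eigenvalues `(-b)^{-k}`, the `k`-th column of `U`
being a right eigenvector and the `k`-th row of `V` a left eigenvector for `(-b)^{-k}`. -/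
theorem statement11 (p c n : ℕ) (hp : 1 ≤ p) (hc : 1 ≤ c) (hn : 1 ≤ n)
    (b : ℕ) (hb : b + 1 = p * c) (hb1 : 1 ≤ b)
    (ℓ : ℕ) (hℓ : ℓ = if p = 1 then n - 1 else n)
    (P : Matrix (Fin (ℓ + 1)) (Fin (ℓ + 1)) ℝ)
    (hP : ∀ i j : Fin (ℓ + 1), P i j =
      ((Finset.univ.filter fun X : Fin n → Fin b =>
          ((i : ℕ) + (∑ t, (X t : ℕ)) + ((b + 1) / p - 1)) / b = n - (j : ℕ)).card : ℝ)
        / (b : ℝ) ^ n) :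
    (∀ N : ℕ, ∀ i j : Fin (ℓ + 1),
        (P ^ N) i j = ∑ k : Fin (ℓ + 1),
          ((-(b : ℝ)) ^ ((k : ℕ) * N))⁻¹ * uEnt p n i k * vEnt p n k j)
      ∧ (∀ k : Fin (ℓ + 1),
          P.mulVec (fun i : Fin (ℓ + 1) => uEnt p n i k)
            = ((-(b : ℝ)) ^ (k : ℕ))⁻¹ • fun i : Fin (ℓ + 1) => uEnt p n i k)
      ∧ (∀ k : Fin (ℓ + 1),
          Matrix.vecMul (fun j : Fin (ℓ + 1) => vEnt p n k j) P
            = ((-(b : ℝ)) ^ (k : ℕ))⁻¹ • fun j : Fin (ℓ + 1) => vEnt p n k j) := by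
  have hℓn : ℓ ≤ n := by split_ifs at hℓ <;> omega
  have hbp : (b + 1) / p = c := by rw [hb, Nat.mul_div_cancel_left c hp]
  let U : Matrix (Fin (ℓ + 1)) (Fin (ℓ + 1)) ℝ := .of fun i k => uEnt p n i k
  let V : Matrix (Fin (ℓ + 1)) (Fin (ℓ + 1)) ℝ := .of fun k j => vEnt p n k j
  let d : Fin (ℓ + 1) → ℝ := fun k => ((-(b : ℝ)) ^ (k : ℕ))⁻¹
  have hUV : U * V = 1 := by
    ext i j
    simpa [U, V, Matrix.mul_apply, Matrix.one_apply, Fin.val_inj] using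
      sum_uEnt_mul_vEnt hp hℓ (Nat.lt_succ_iff.1 i.isLt) j
  have hPU : P * U = U * Matrix.diagonal d := by
    ext i k
    rw [Matrix.mul_diagonal, Matrix.mul_apply]
    simp only [U, Matrix.of_apply, hP, hbp, div_mul_eq_mul_div, ← sum_div]
    rw [sum_card_mul_uEnt hp hc hn hb1 hb hℓ (Nat.lt_succ_iff.1 i.isLt), mul_div_right_comm,
      neg_one_pow_mul_neg_pow_sub_div_pow (by positivity) (k.is_le.trans hℓn), mul_comm]
  refine ⟨fun N i j => ?_, Matrix.mulVec_col_eq_smul hPU, Matrix.vecMul_row_eq_smul hUV hPU⟩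
  rw [Matrix.pow_eq_mul_diagonal_pow_mul hUV hPU, Matrix.mul_apply]
  refine sum_congr rfl fun k _ => ?_
  simp only [U, V, d, Matrix.mul_diagonal, Matrix.of_apply, Pi.pow_apply, ← inv_pow, ← pow_mul]
  ring
end
end
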